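/- arXiv:2509.22543 — 8 statements merged into one kernel-verified Lean document; each statement's English description precedes it below -/
import Mathlib

section
/- Let (L, A, M, Y) and counterfactuals (M^a, Y^a) be discrete random variables on a finite probability space, restricted to the event S=0. Assume: (a) consistency: M^a = M and Y^a = Y on the event A=a; (b) conditional independence: Y^a is independent of A given (M^a, L) and the law of Y^a given (M^a, L, A) does not depend on a, so that E[Y^a | M^a=m, L=l] = E[Y | M=m, L=l] for all (m,l) with positive probability; (c) the pre-specified stochastic-intervention exposure law satisfies the oracle condition p^g(m|l) = P(M^a=m | L=l). Then the stochastic exposure estimand \Psi^g := \sum_{m,l} E[Y | M=m, L=l] p^g(m|l) P(L=l) equals the long-term effect estimand \Psi^a := E[Y^a]. -/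
open Finset
open scoped Classical

noncomputable section

/-- Probability of an event under weight function `w`. -/
def Pr {Ω : Type*} [Fintype Ω] (w : Ω → ℝ) (E : Ω → Prop) : ℝ :=
  ∑ ω, if E ω then w ω else 0

/-- Conditional probability `P(E | F)`. -/
def CP {Ω : Type*} [Fintype Ω] (w : Ω → ℝ) (E F : Ω → Prop) : ℝ :=
  Pr w (fun ω => E ω ∧ F ω) / Pr w F

/-- Conditional expectation `E[X | F]`. -/
def CE {Ω : Type*} [Fintype Ω] (w : Ω → ℝ) (X : Ω → ℝ) (F : Ω → Prop) : ℝ :=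
  (∑ ω, if F ω then w ω * X ω else 0) / Pr w F

/-- under the SEE model the stochastic exposure effect equals
the long-term effect (Section 4.2). -/
theorem see_equals_lte
    {Ω 𝕃 𝕄 𝔸 : Type*} [Fintype Ω] [Fintype 𝕃] [Fintype 𝕄] [Fintype 𝔸]
    (w : Ω → ℝ) (hw0 : ∀ ω, 0 ≤ w ω) (hw1 : ∑ ω, w ω = 1)
    (L : Ω → 𝕃) (A : Ω → 𝔸) (M : Ω → 𝕄) (Y : Ω → ℝ)
    (a : 𝔸) (Ma : Ω → 𝕄) (Ya : Ω → ℝ)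
    (pg : 𝕄 → 𝕃 → ℝ)
    -- positivity of the relevant conditioning events
    (hpos : ∀ m l, Pr w (fun ω => M ω = m ∧ L ω = l) > 0 ∧
      Pr w (fun ω => Ma ω = m ∧ L ω = l) > 0 ∧ Pr w (fun ω => L ω = l) > 0)
    -- (a) consistency
    (hconsist : ∀ ω, A ω = a → Ma ω = M ω ∧ Ya ω = Y ω)
    -- (b) E[Y^a | M^a=m, L=l] = E[Y | M=m, L=l]
    (hCE : ∀ m l, Pr w (fun ω => M ω = m ∧ L ω = l) > 0 →
      CE w Ya (fun ω => Ma ω = m ∧ L ω = l) =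
      CE w Y (fun ω => M ω = m ∧ L ω = l))
    -- (c) oracle exposure law: p^g(m|l) = P(M^a = m | L = l)
    (hOracle : ∀ m l, pg m l = CP w (fun ω => Ma ω = m) (fun ω => L ω = l)) :
    (∑ m : 𝕄, ∑ l : 𝕃,
        CE w Y (fun ω => M ω = m ∧ L ω = l) * pg m l *
        Pr w (fun ω => L ω = l)) =
      ∑ ω, w ω * Ya ω := by
  have key : ∀ m l, CE w Y (fun ω => M ω = m ∧ L ω = l) * pg m l *
      Pr w (fun ω => L ω = l)
      = ∑ ω, if Ma ω = m ∧ L ω = l then w ω * Ya ω else 0 := by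
    intro m l
    obtain ⟨h1, h2, h3⟩ := hpos m l
    rw [← hCE m l h1, hOracle, CE, CP]
    field_simp
  calc (∑ m : 𝕄, ∑ l : 𝕃,
        CE w Y (fun ω => M ω = m ∧ L ω = l) * pg m l *
        Pr w (fun ω => L ω = l))
      = ∑ m : 𝕄, ∑ l : 𝕃, ∑ ω, if Ma ω = m ∧ L ω = l then w ω * Ya ω else 0 := by
        simp only [key]
    _ = ∑ ω, ∑ m : 𝕄, ∑ l : 𝕃, if Ma ω = m ∧ L ω = l then w ω * Ya ω else 0 := by
        have h : (∑ m : 𝕄, ∑ l : 𝕃, ∑ ω, if Ma ω = m ∧ L ω = l then w ω * Ya ω else 0)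
            = ∑ m : 𝕄, ∑ ω, ∑ l : 𝕃, if Ma ω = m ∧ L ω = l then w ω * Ya ω else 0 :=
          Finset.sum_congr rfl fun m _ => Finset.sum_comm
        rw [h, Finset.sum_comm]
    _ = ∑ ω, w ω * Ya ω := by
        refine Finset.sum_congr rfl fun ω _ => ?_
        simp [ite_and, Finset.sum_ite_eq, eq_comm]
end
end

section
/- Let S, L, A, M, Y be discrete random variables with P(S=0) > 0 and all conditioning events below of positive probability. Define T1(l,m) = E[Y | L=l, M=m, S=0], T2(l,a) = E[T1(L,M) | L=l, A=a, S=1] = \sum_m T1(l,m) P(M=m | L=l, A=a, S=1), and \Psi = E[T2(L,a) | S=0]. Then the function \varphi(O) = (1-S)/P(S=0) * [P(A=a | S=1, M, L) p(M | S=1, L)] / [P(A=a | S=1, L) p(M | S=0, L)] * (Y - T1(L,M)) + S*1{A=a}*P(S=0|L) / [P(S=0) P(A=a|S=1,L) P(S=1|L)] * (T1(L,M) - T2(L,A)) + (1-S)/P(S=0) * (T2(L,a) - \Psi) has mean zero: E[\varphi(O)] = 0. -/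
open Finset
open scoped Classical

noncomputable section

lemma Pr_congr {Ω : Type*} [Fintype Ω] (w : Ω → ℝ) {E F : Ω → Prop}
    (h : ∀ ω, E ω ↔ F ω) : Pr w E = Pr w F := by
  unfold Pr
  exact Finset.sum_congr rfl fun ω _ => by simp [h ω]

/-- the efficient influence function (Equation 3) has mean zero. -/
theorem eif_mean_zero
    {Ω 𝕃 𝕄 𝔸 : Type*} [Fintype Ω] [Fintype 𝕃] [Fintype 𝕄] [Fintype 𝔸]
    (w : Ω → ℝ) (hw0 : ∀ ω, 0 ≤ w ω) (hw1 : ∑ ω, w ω = 1)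
    (S : Ω → ℕ) (L : Ω → 𝕃) (A : Ω → 𝔸) (M : Ω → 𝕄) (Y : Ω → ℝ) (a : 𝔸)
    (hposS0 : Pr w (fun ω => S ω = 0) > 0)
    -- positivity of all conditioning events appearing below
    (hpos : ∀ m l a' s, s = 0 ∨ s = 1 →
      Pr w (fun ω => S ω = s ∧ M ω = m ∧ L ω = l) > 0 ∧
      Pr w (fun ω => S ω = s ∧ A ω = a' ∧ L ω = l) > 0 ∧
      Pr w (fun ω => L ω = l) > 0)
    (T1 : 𝕃 → 𝕄 → ℝ) (T2 : 𝕃 → 𝔸 → ℝ) (Ψ : ℝ)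
    (hT1 : ∀ l m, T1 l m = CE w Y (fun ω => L ω = l ∧ M ω = m ∧ S ω = 0))
    (hT2 : ∀ l a', T2 l a' = ∑ m : 𝕄,
      T1 l m * CP w (fun ω => M ω = m) (fun ω => L ω = l ∧ A ω = a' ∧ S ω = 1))
    (hΨ : Ψ = CE w (fun ω => T2 (L ω) a) (fun ω => S ω = 0)) :
    (∑ ω, w ω *
      ((if S ω = 0 then (1:ℝ) else 0) / Pr w (fun ω' => S ω' = 0) *
        (CP w (fun ω' => A ω' = a) (fun ω' => S ω' = 1 ∧ M ω' = M ω ∧ L ω' = L ω) *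
         CP w (fun ω' => M ω' = M ω) (fun ω' => S ω' = 1 ∧ L ω' = L ω)) /
        (CP w (fun ω' => A ω' = a) (fun ω' => S ω' = 1 ∧ L ω' = L ω) *
         CP w (fun ω' => M ω' = M ω) (fun ω' => S ω' = 0 ∧ L ω' = L ω)) *
        (Y ω - T1 (L ω) (M ω)) +
       (if S ω = 1 ∧ A ω = a then (1:ℝ) else 0) *
        CP w (fun ω' => S ω' = 0) (fun ω' => L ω' = L ω) /
        (Pr w (fun ω' => S ω' = 0) *
         CP w (fun ω' => A ω' = a) (fun ω' => S ω' = 1 ∧ L ω' = L ω) *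
         CP w (fun ω' => S ω' = 1) (fun ω' => L ω' = L ω)) *
        (T1 (L ω) (M ω) - T2 (L ω) (A ω)) +
       (if S ω = 0 then (1:ℝ) else 0) / Pr w (fun ω' => S ω' = 0) *
        (T2 (L ω) a - Ψ))) = 0 := by
  classical
  have hP0 : Pr w (fun ω => S ω = 0) ≠ 0 := ne_of_gt hposS0
  -- Key lemma 1
  have key1 : ∀ l m,
      ∑ ω, (if S ω = 0 ∧ M ω = m ∧ L ω = l then w ω * (Y ω - T1 l m) else 0) = 0 := by
    intro l m
    have hpr : Pr w (fun ω => L ω = l ∧ M ω = m ∧ S ω = 0)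
        = Pr w (fun ω => S ω = 0 ∧ M ω = m ∧ L ω = l) := Pr_congr w (fun ω => by tauto)
    have hppos : (0:ℝ) < Pr w (fun ω => S ω = 0 ∧ M ω = m ∧ L ω = l) :=
      (hpos m l a 0 (Or.inl rfl)).1
    have hnum : (∑ ω, (if L ω = l ∧ M ω = m ∧ S ω = 0 then w ω * Y ω else 0))
        = ∑ ω, (if S ω = 0 ∧ M ω = m ∧ L ω = l then w ω * Y ω else 0) :=
      Finset.sum_congr rfl fun ω _ => if_congr (by tauto) rfl rfl
    have hT := hT1 l m
    simp only [CE] at hT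
    have hTmul : T1 l m * Pr w (fun ω => S ω = 0 ∧ M ω = m ∧ L ω = l)
        = ∑ ω, (if S ω = 0 ∧ M ω = m ∧ L ω = l then w ω * Y ω else 0) := by
      have hne : Pr w (fun ω => L ω = l ∧ M ω = m ∧ S ω = 0) ≠ 0 := by
        rw [hpr]; exact ne_of_gt hppos
      rw [hT, ← hnum, ← hpr, div_mul_cancel₀ _ hne]
      refine Finset.sum_congr rfl fun x _ => ?_
      by_cases h : L x = l ∧ M x = m ∧ S x = 0 <;> simp [h]
    have split : (∑ ω, (if S ω = 0 ∧ M ω = m ∧ L ω = l then w ω * (Y ω - T1 l m) else 0))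
        = (∑ ω, (if S ω = 0 ∧ M ω = m ∧ L ω = l then w ω * Y ω else 0))
          - T1 l m * Pr w (fun ω => S ω = 0 ∧ M ω = m ∧ L ω = l) := by
      rw [Pr, Finset.mul_sum, ← Finset.sum_sub_distrib]
      refine Finset.sum_congr rfl fun ω _ => ?_
      by_cases h : S ω = 0 ∧ M ω = m ∧ L ω = l <;> simp [h] <;> ring
    rw [split, ← hTmul]; ring
  -- Key lemma 2
  have key2 : ∀ l,
      ∑ ω, (if S ω = 1 ∧ A ω = a ∧ L ω = l then w ω * (T1 l (M ω) - T2 l a) else 0) = 0 := by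
    intro l
    have hΩ : Nonempty Ω := by
      by_contra h
      rw [not_nonempty_iff] at h
      rw [Pr] at hposS0
      simp [Finset.univ_eq_empty] at hposS0
    have m0 : 𝕄 := M (Classical.arbitrary Ω)
    have hppos : (0:ℝ) < Pr w (fun ω => S ω = 1 ∧ A ω = a ∧ L ω = l) :=
      (hpos m0 l a 1 (Or.inr rfl)).2.1
    have hpr : Pr w (fun ω => L ω = l ∧ A ω = a ∧ S ω = 1)
        = Pr w (fun ω => S ω = 1 ∧ A ω = a ∧ L ω = l) := Pr_congr w (fun ω => by tauto)
    have hT2mul : T2 l a * Pr w (fun ω => S ω = 1 ∧ A ω = a ∧ L ω = l)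
        = ∑ m, T1 l m * Pr w (fun ω => M ω = m ∧ L ω = l ∧ A ω = a ∧ S ω = 1) := by
      rw [hT2 l a, Finset.sum_mul]
      refine Finset.sum_congr rfl fun m _ => ?_
      rw [CP, ← hpr, mul_assoc, div_mul_cancel₀]
      rw [hpr]; exact ne_of_gt hppos
    have expand : (∑ ω, (if S ω = 1 ∧ A ω = a ∧ L ω = l then w ω * T1 l (M ω) else 0))
        = ∑ m, T1 l m * Pr w (fun ω => M ω = m ∧ L ω = l ∧ A ω = a ∧ S ω = 1) := by
      have point : ∀ ω, (if S ω = 1 ∧ A ω = a ∧ L ω = l then w ω * T1 l (M ω) else 0)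
          = ∑ m, (if M ω = m ∧ L ω = l ∧ A ω = a ∧ S ω = 1 then T1 l m * w ω else 0) := by
        intro ω
        by_cases h : S ω = 1 ∧ A ω = a ∧ L ω = l
        · simp [h.1, h.2.1, h.2.2, Finset.sum_ite_eq, mul_comm]
        · rw [if_neg h]
          symm
          apply Finset.sum_eq_zero
          intro m _
          rw [if_neg]
          tauto
      calc (∑ ω, (if S ω = 1 ∧ A ω = a ∧ L ω = l then w ω * T1 l (M ω) else 0))
          = ∑ ω, ∑ m, (if M ω = m ∧ L ω = l ∧ A ω = a ∧ S ω = 1 then T1 l m * w ω else 0) :=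
            Finset.sum_congr rfl fun ω _ => point ω
        _ = ∑ m, ∑ ω, (if M ω = m ∧ L ω = l ∧ A ω = a ∧ S ω = 1 then T1 l m * w ω else 0) :=
            Finset.sum_comm
        _ = ∑ m, T1 l m * Pr w (fun ω => M ω = m ∧ L ω = l ∧ A ω = a ∧ S ω = 1) := by
            refine Finset.sum_congr rfl fun m _ => ?_
            rw [Pr, Finset.mul_sum]
            refine Finset.sum_congr rfl fun ω _ => ?_
            by_cases h : M ω = m ∧ L ω = l ∧ A ω = a ∧ S ω = 1 <;> simp [h]
    have split : (∑ ω, (if S ω = 1 ∧ A ω = a ∧ L ω = l then w ω * (T1 l (M ω) - T2 l a) else 0))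
        = (∑ ω, (if S ω = 1 ∧ A ω = a ∧ L ω = l then w ω * T1 l (M ω) else 0))
          - T2 l a * Pr w (fun ω => S ω = 1 ∧ A ω = a ∧ L ω = l) := by
      rw [Pr, Finset.mul_sum, ← Finset.sum_sub_distrib]
      refine Finset.sum_congr rfl fun ω _ => ?_
      by_cases h : S ω = 1 ∧ A ω = a ∧ L ω = l <;> simp [h] <;> ring
    rw [split, expand, hT2mul, sub_self]
  -- Key lemma 3
  have key3 : ∑ ω, (if S ω = 0 then w ω * (T2 (L ω) a - Ψ) else 0) = 0 := by
    have hnum : Ψ * Pr w (fun ω => S ω = 0)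
        = ∑ ω, (if S ω = 0 then w ω * T2 (L ω) a else 0) := by
      rw [hΨ]
      simp only [CE]
      exact div_mul_cancel₀ _ hP0
    have split : (∑ ω, (if S ω = 0 then w ω * (T2 (L ω) a - Ψ) else 0))
        = (∑ ω, (if S ω = 0 then w ω * T2 (L ω) a else 0))
          - Ψ * Pr w (fun ω => S ω = 0) := by
      rw [Pr, Finset.mul_sum, ← Finset.sum_sub_distrib]
      refine Finset.sum_congr rfl fun ω _ => ?_
      by_cases h : S ω = 0 <;> simp [h] <;> ring
    rw [split, ← hnum, sub_self]
  -- coefficient functions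
  set c : 𝕃 → 𝕄 → ℝ := fun l m =>
    (CP w (fun ω' => A ω' = a) (fun ω' => S ω' = 1 ∧ M ω' = m ∧ L ω' = l) *
     CP w (fun ω' => M ω' = m) (fun ω' => S ω' = 1 ∧ L ω' = l)) /
    (CP w (fun ω' => A ω' = a) (fun ω' => S ω' = 1 ∧ L ω' = l) *
     CP w (fun ω' => M ω' = m) (fun ω' => S ω' = 0 ∧ L ω' = l)) with hc
  set d : 𝕃 → ℝ := fun l =>
    CP w (fun ω' => S ω' = 0) (fun ω' => L ω' = l) /
    (Pr w (fun ω' => S ω' = 0) *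
     CP w (fun ω' => A ω' = a) (fun ω' => S ω' = 1 ∧ L ω' = l) *
     CP w (fun ω' => S ω' = 1) (fun ω' => L ω' = l)) with hd
  have h1 : (∑ ω, w ω *
      ((if S ω = 0 then (1:ℝ) else 0) / Pr w (fun ω' => S ω' = 0) *
        (CP w (fun ω' => A ω' = a) (fun ω' => S ω' = 1 ∧ M ω' = M ω ∧ L ω' = L ω) *
         CP w (fun ω' => M ω' = M ω) (fun ω' => S ω' = 1 ∧ L ω' = L ω)) /
        (CP w (fun ω' => A ω' = a) (fun ω' => S ω' = 1 ∧ L ω' = L ω) *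
         CP w (fun ω' => M ω' = M ω) (fun ω' => S ω' = 0 ∧ L ω' = L ω)) *
        (Y ω - T1 (L ω) (M ω)))) = 0 := by
    have point : ∀ ω, w ω *
        ((if S ω = 0 then (1:ℝ) else 0) / Pr w (fun ω' => S ω' = 0) *
          (CP w (fun ω' => A ω' = a) (fun ω' => S ω' = 1 ∧ M ω' = M ω ∧ L ω' = L ω) *
           CP w (fun ω' => M ω' = M ω) (fun ω' => S ω' = 1 ∧ L ω' = L ω)) /
          (CP w (fun ω' => A ω' = a) (fun ω' => S ω' = 1 ∧ L ω' = L ω) *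
           CP w (fun ω' => M ω' = M ω) (fun ω' => S ω' = 0 ∧ L ω' = L ω)) *
          (Y ω - T1 (L ω) (M ω)))
        = ∑ l, ∑ m, (c l m / Pr w (fun ω' => S ω' = 0)) *
            (if S ω = 0 ∧ M ω = m ∧ L ω = l then w ω * (Y ω - T1 l m) else 0) := by
      intro ω
      by_cases hs : S ω = 0
      · have step1 : ∀ l, (∑ m, (c l m / Pr w (fun ω' => S ω' = 0)) *
            (if S ω = 0 ∧ M ω = m ∧ L ω = l then w ω * (Y ω - T1 l m) else 0))
            = if L ω = l then (c l (M ω) / Pr w (fun ω' => S ω' = 0)) *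
                (w ω * (Y ω - T1 l (M ω))) else 0 := by
          intro l
          by_cases h2 : L ω = l
          · rw [if_pos h2]
            have point2 : ∀ m, (c l m / Pr w (fun ω' => S ω' = 0)) *
                (if S ω = 0 ∧ M ω = m ∧ L ω = l then w ω * (Y ω - T1 l m) else 0)
                = if M ω = m then (c l m / Pr w (fun ω' => S ω' = 0)) *
                    (w ω * (Y ω - T1 l m)) else 0 := by
              intro m
              by_cases h1 : M ω = m <;> simp [hs, h1, h2]
            simp only [point2]
            simp [Finset.sum_ite_eq]
          · rw [if_neg h2]
            exact Finset.sum_eq_zero fun m _ => by simp [h2]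
        simp only [step1]
        simp only [Finset.sum_ite_eq, Finset.mem_univ, if_true]
        simp [hc, hs]
        ring
      · have : ∀ l m, (c l m / Pr w (fun ω' => S ω' = 0)) *
            (if S ω = 0 ∧ M ω = m ∧ L ω = l then w ω * (Y ω - T1 l m) else 0) = 0 := by
          intro l m; simp [hs]
        simp [this, hs]
    calc (∑ ω, w ω *
        ((if S ω = 0 then (1:ℝ) else 0) / Pr w (fun ω' => S ω' = 0) *
          (CP w (fun ω' => A ω' = a) (fun ω' => S ω' = 1 ∧ M ω' = M ω ∧ L ω' = L ω) *
           CP w (fun ω' => M ω' = M ω) (fun ω' => S ω' = 1 ∧ L ω' = L ω)) /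
          (CP w (fun ω' => A ω' = a) (fun ω' => S ω' = 1 ∧ L ω' = L ω) *
           CP w (fun ω' => M ω' = M ω) (fun ω' => S ω' = 0 ∧ L ω' = L ω)) *
          (Y ω - T1 (L ω) (M ω))))
        = ∑ ω, ∑ l, ∑ m, (c l m / Pr w (fun ω' => S ω' = 0)) *
            (if S ω = 0 ∧ M ω = m ∧ L ω = l then w ω * (Y ω - T1 l m) else 0) :=
          Finset.sum_congr rfl fun ω _ => point ω
      _ = ∑ l, ∑ ω, ∑ m, (c l m / Pr w (fun ω' => S ω' = 0)) *
            (if S ω = 0 ∧ M ω = m ∧ L ω = l then w ω * (Y ω - T1 l m) else 0) :=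
          Finset.sum_comm
      _ = ∑ l, ∑ m, ∑ ω, (c l m / Pr w (fun ω' => S ω' = 0)) *
            (if S ω = 0 ∧ M ω = m ∧ L ω = l then w ω * (Y ω - T1 l m) else 0) :=
          Finset.sum_congr rfl fun l _ => Finset.sum_comm
      _ = 0 := by
          refine Finset.sum_eq_zero fun l _ => Finset.sum_eq_zero fun m _ => ?_
          rw [← Finset.mul_sum, key1 l m, mul_zero]
  have h2 : (∑ ω, w ω *
      ((if S ω = 1 ∧ A ω = a then (1:ℝ) else 0) *
        CP w (fun ω' => S ω' = 0) (fun ω' => L ω' = L ω) /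
        (Pr w (fun ω' => S ω' = 0) *
         CP w (fun ω' => A ω' = a) (fun ω' => S ω' = 1 ∧ L ω' = L ω) *
         CP w (fun ω' => S ω' = 1) (fun ω' => L ω' = L ω)) *
        (T1 (L ω) (M ω) - T2 (L ω) (A ω)))) = 0 := by
    have point : ∀ ω, w ω *
        ((if S ω = 1 ∧ A ω = a then (1:ℝ) else 0) *
          CP w (fun ω' => S ω' = 0) (fun ω' => L ω' = L ω) /
          (Pr w (fun ω' => S ω' = 0) *
           CP w (fun ω' => A ω' = a) (fun ω' => S ω' = 1 ∧ L ω' = L ω) *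
           CP w (fun ω' => S ω' = 1) (fun ω' => L ω' = L ω)) *
          (T1 (L ω) (M ω) - T2 (L ω) (A ω)))
        = ∑ l, d l * (if S ω = 1 ∧ A ω = a ∧ L ω = l then
            w ω * (T1 l (M ω) - T2 l a) else 0) := by
      intro ω
      by_cases h : S ω = 1 ∧ A ω = a
      · have : ∀ l, d l * (if S ω = 1 ∧ A ω = a ∧ L ω = l then
            w ω * (T1 l (M ω) - T2 l a) else 0)
            = if L ω = l then d l * (w ω * (T1 l (M ω) - T2 l a)) else 0 := by
          intro l
          by_cases h2 : L ω = l <;> simp [h.1, h.2, h2]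
        simp only [this, Finset.sum_ite_eq, Finset.mem_univ, if_true]
        simp [hd, h.1, h.2]
        ring
      · have : ∀ l, d l * (if S ω = 1 ∧ A ω = a ∧ L ω = l then
            w ω * (T1 l (M ω) - T2 l a) else 0) = 0 := by
          intro l
          rw [if_neg (by tauto), mul_zero]
        simp [this, h]
    calc (∑ ω, w ω *
        ((if S ω = 1 ∧ A ω = a then (1:ℝ) else 0) *
          CP w (fun ω' => S ω' = 0) (fun ω' => L ω' = L ω) /
          (Pr w (fun ω' => S ω' = 0) *
           CP w (fun ω' => A ω' = a) (fun ω' => S ω' = 1 ∧ L ω' = L ω) *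
           CP w (fun ω' => S ω' = 1) (fun ω' => L ω' = L ω)) *
          (T1 (L ω) (M ω) - T2 (L ω) (A ω))))
        = ∑ ω, ∑ l, d l * (if S ω = 1 ∧ A ω = a ∧ L ω = l then
            w ω * (T1 l (M ω) - T2 l a) else 0) :=
          Finset.sum_congr rfl fun ω _ => point ω
      _ = ∑ l, ∑ ω, d l * (if S ω = 1 ∧ A ω = a ∧ L ω = l then
            w ω * (T1 l (M ω) - T2 l a) else 0) := Finset.sum_comm
      _ = 0 := by
          refine Finset.sum_eq_zero fun l _ => ?_
          rw [← Finset.mul_sum, key2 l, mul_zero]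
  have h3 : (∑ ω, w ω *
      ((if S ω = 0 then (1:ℝ) else 0) / Pr w (fun ω' => S ω' = 0) *
        (T2 (L ω) a - Ψ))) = 0 := by
    have point : ∀ ω, w ω *
        ((if S ω = 0 then (1:ℝ) else 0) / Pr w (fun ω' => S ω' = 0) * (T2 (L ω) a - Ψ))
        = (Pr w (fun ω' => S ω' = 0))⁻¹ *
          (if S ω = 0 then w ω * (T2 (L ω) a - Ψ) else 0) := by
      intro ω
      by_cases h : S ω = 0 <;> simp [h] <;> ring
    calc (∑ ω, w ω *
        ((if S ω = 0 then (1:ℝ) else 0) / Pr w (fun ω' => S ω' = 0) * (T2 (L ω) a - Ψ)))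
        = ∑ ω, (Pr w (fun ω' => S ω' = 0))⁻¹ *
            (if S ω = 0 then w ω * (T2 (L ω) a - Ψ) else 0) :=
          Finset.sum_congr rfl fun ω _ => point ω
      _ = 0 := by rw [← Finset.mul_sum, key3, mul_zero]
  calc (∑ ω, w ω *
      ((if S ω = 0 then (1:ℝ) else 0) / Pr w (fun ω' => S ω' = 0) *
        (CP w (fun ω' => A ω' = a) (fun ω' => S ω' = 1 ∧ M ω' = M ω ∧ L ω' = L ω) *
         CP w (fun ω' => M ω' = M ω) (fun ω' => S ω' = 1 ∧ L ω' = L ω)) /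
        (CP w (fun ω' => A ω' = a) (fun ω' => S ω' = 1 ∧ L ω' = L ω) *
         CP w (fun ω' => M ω' = M ω) (fun ω' => S ω' = 0 ∧ L ω' = L ω)) *
        (Y ω - T1 (L ω) (M ω)) +
       (if S ω = 1 ∧ A ω = a then (1:ℝ) else 0) *
        CP w (fun ω' => S ω' = 0) (fun ω' => L ω' = L ω) /
        (Pr w (fun ω' => S ω' = 0) *
         CP w (fun ω' => A ω' = a) (fun ω' => S ω' = 1 ∧ L ω' = L ω) *
         CP w (fun ω' => S ω' = 1) (fun ω' => L ω' = L ω)) *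
        (T1 (L ω) (M ω) - T2 (L ω) (A ω)) +
       (if S ω = 0 then (1:ℝ) else 0) / Pr w (fun ω' => S ω' = 0) *
        (T2 (L ω) a - Ψ)))
      = (∑ ω, w ω *
      ((if S ω = 0 then (1:ℝ) else 0) / Pr w (fun ω' => S ω' = 0) *
        (CP w (fun ω' => A ω' = a) (fun ω' => S ω' = 1 ∧ M ω' = M ω ∧ L ω' = L ω) *
         CP w (fun ω' => M ω' = M ω) (fun ω' => S ω' = 1 ∧ L ω' = L ω)) /
        (CP w (fun ω' => A ω' = a) (fun ω' => S ω' = 1 ∧ L ω' = L ω) *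
         CP w (fun ω' => M ω' = M ω) (fun ω' => S ω' = 0 ∧ L ω' = L ω)) *
        (Y ω - T1 (L ω) (M ω))))
      + (∑ ω, w ω *
      ((if S ω = 1 ∧ A ω = a then (1:ℝ) else 0) *
        CP w (fun ω' => S ω' = 0) (fun ω' => L ω' = L ω) /
        (Pr w (fun ω' => S ω' = 0) *
         CP w (fun ω' => A ω' = a) (fun ω' => S ω' = 1 ∧ L ω' = L ω) *
         CP w (fun ω' => S ω' = 1) (fun ω' => L ω' = L ω)) *
        (T1 (L ω) (M ω) - T2 (L ω) (A ω))))
      + (∑ ω, w ω *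
      ((if S ω = 0 then (1:ℝ) else 0) / Pr w (fun ω' => S ω' = 0) *
        (T2 (L ω) a - Ψ))) := by
        rw [← Finset.sum_add_distrib, ← Finset.sum_add_distrib]
        exact Finset.sum_congr rfl fun ω _ => by ring
    _ = 0 := by rw [h1, h2, h3]; ring
end
end

section
/- Under the same setup, suppose instead model M2 holds: T1*(l,m) = E[Y | L=l, M=m, S=0] and T2*(l,a) = \sum_m T1*(l,m) P(M=m | L=l, A=a, S=1), while e*, f*, g*, h* are arbitrary functions bounded away from 0 and 1. Then E[ H(1/P(S=0), e*, f*, g*, h*, T2*, T1*) ] = \Psi^a. -/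
open Finset
open scoped Classical

noncomputable section

/-- The estimating function `H` built from working nuisance functions. -/
def Hfun {Ω 𝕃 𝕄 𝔸 : Type*}
    (S : Ω → ℕ) (L : Ω → 𝕃) (A : Ω → 𝔸) (M : Ω → 𝕄) (Y : Ω → ℝ) (a : 𝔸)
    (γ : ℝ) (e : 𝕃 → ℝ) (f : 𝕄 → 𝕃 → ℝ) (g : ℕ → 𝕃 → 𝕄 → ℝ) (h : ℕ → 𝕃 → ℝ)
    (T2 : 𝕃 → 𝔸 → ℝ) (T1 : 𝕃 → 𝕄 → ℝ) (ω : Ω) : ℝ :=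
  γ * ((if S ω = 0 then (1:ℝ) else 0) * f (M ω) (L ω) * g 1 (L ω) (M ω) /
        (e (L ω) * g 0 (L ω) (M ω)) * (Y ω - T1 (L ω) (M ω)) +
      (if S ω = 1 ∧ A ω = a then (1:ℝ) else 0) * h 0 (L ω) /
        (e (L ω) * h 1 (L ω)) * (T1 (L ω) (M ω) - T2 (L ω) (A ω)) +
      (if S ω = 0 then (1:ℝ) else 0) * T2 (L ω) a)

/-- The identified g-formula functional `Ψ^a`. -/
def PsiA {Ω 𝕃 𝕄 𝔸 : Type*} [Fintype Ω] [Fintype 𝕃] [Fintype 𝕄]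
    (w : Ω → ℝ) (S : Ω → ℕ) (L : Ω → 𝕃) (A : Ω → 𝔸) (M : Ω → 𝕄)
    (Y : Ω → ℝ) (a : 𝔸) : ℝ :=
  ∑ m : 𝕄, ∑ l : 𝕃,
    CE w Y (fun ω => M ω = m ∧ L ω = l ∧ S ω = 0) *
    CP w (fun ω => M ω = m) (fun ω => L ω = l ∧ A ω = a ∧ S ω = 1) *
    CP w (fun ω => L ω = l) (fun ω => S ω = 0)

lemma ite_inst_congr {α : Sort*} {b c : Prop} {i1 : Decidable b} {i2 : Decidable c}
    (h : b ↔ c) (x y : α) : @ite α b i1 x y = @ite α c i2 x y := by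
  rcases i1 with hb | hb <;> rcases i2 with hc | hc <;> simp_all

lemma sum_fiber {Ω κ : Type*} [Fintype Ω] [Fintype κ] (K : Ω → κ) (ψ : Ω → ℝ) :
    ∑ ω, ψ ω = ∑ k, ∑ ω, if K ω = k then ψ ω else 0 := by
  rw [Finset.sum_comm]
  refine Finset.sum_congr rfl fun ω _ => ?_
  simp

lemma Pr_fiber {Ω 𝕄 : Type*} [Fintype Ω] [Fintype 𝕄] (w : Ω → ℝ) (M : Ω → 𝕄)
    (P : Ω → Prop) : Pr w P = ∑ m, Pr w (fun ω => M ω = m ∧ P ω) := by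
  unfold Pr
  rw [sum_fiber M (fun ω => if P ω then w ω else 0)]
  refine Finset.sum_congr rfl fun m _ => Finset.sum_congr rfl fun ω _ => ?_
  by_cases h1 : M ω = m <;> by_cases h2 : P ω <;> simp [h1, h2]

/-- second arm of triple robustness (model M2): correct outcome
regressions alone yield an unbiased estimating function. -/
theorem triple_robust_M2
    {Ω 𝕃 𝕄 𝔸 : Type*} [Fintype Ω] [Fintype 𝕃] [Fintype 𝕄] [Fintype 𝔸]
    (w : Ω → ℝ) (hw0 : ∀ ω, 0 ≤ w ω) (hw1 : ∑ ω, w ω = 1)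
    (S : Ω → ℕ) (L : Ω → 𝕃) (A : Ω → 𝔸) (M : Ω → 𝕄) (Y : Ω → ℝ) (a : 𝔸)
    (hposS0 : Pr w (fun ω => S ω = 0) > 0)
    (hpos : ∀ m l a' s, s = 0 ∨ s = 1 →
      Pr w (fun ω => S ω = s ∧ M ω = m ∧ L ω = l) > 0 ∧
      Pr w (fun ω => S ω = s ∧ A ω = a' ∧ L ω = l) > 0 ∧
      Pr w (fun ω => L ω = l) > 0)
    (e : 𝕃 → ℝ) (f : 𝕄 → 𝕃 → ℝ) (g : ℕ → 𝕃 → 𝕄 → ℝ) (h : ℕ → 𝕃 → ℝ)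
    (T1 : 𝕃 → 𝕄 → ℝ) (T2 : 𝕃 → 𝔸 → ℝ) (ε : ℝ) (hε : ε > 0)
    -- model M2: outcome regressions correct
    (hT1 : ∀ l m, T1 l m = CE w Y (fun ω => L ω = l ∧ M ω = m ∧ S ω = 0))
    (hT2 : ∀ l a', T2 l a' = ∑ m : 𝕄,
      T1 l m * CP w (fun ω => M ω = m) (fun ω => L ω = l ∧ A ω = a' ∧ S ω = 1))
    -- e, f, g, h arbitrary but bounded away from 0 and 1
    (he : ∀ l, ε ≤ e l ∧ e l ≤ 1 - ε)
    (hf : ∀ m l, ε ≤ f m l ∧ f m l ≤ 1 - ε)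
    (hg : ∀ s m l, ε ≤ g s l m ∧ g s l m ≤ 1 - ε)
    (hh : ∀ s l, ε ≤ h s l ∧ h s l ≤ 1 - ε) :
    (∑ ω, w ω *
        Hfun S L A M Y a (1 / Pr w (fun ω => S ω = 0)) e f g h T2 T1 ω) =
      PsiA w S L A M Y a := by
  -- 𝕄 is nonempty (else Ω is empty, contradicting positivity)
  have hM : Nonempty 𝕄 := by
    rcases isEmpty_or_nonempty 𝕄 with hE | hN
    · exfalso
      have hΩ : IsEmpty Ω := Function.isEmpty M
      have : Pr w (fun ω => S ω = 0) = 0 := by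
        unfold Pr; simp [Finset.univ_eq_empty]
      rw [this] at hposS0; exact lt_irrefl 0 hposS0
    · exact hN
  obtain ⟨m0⟩ := hM
  set P0 := Pr w (fun ω => S ω = 0) with hP0def
  have hP0 : P0 ≠ 0 := ne_of_gt hposS0
  set F1 : Ω → ℝ := fun ω => if S ω = 0 then
      (1/P0) * (f (M ω) (L ω) * g 1 (L ω) (M ω) / (e (L ω) * g 0 (L ω) (M ω))) *
        (w ω * (Y ω - T1 (L ω) (M ω))) else 0 with hF1def
  set F2 : Ω → ℝ := fun ω => if S ω = 1 ∧ A ω = a then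
      (1/P0) * (h 0 (L ω) / (e (L ω) * h 1 (L ω))) *
        (w ω * (T1 (L ω) (M ω) - T2 (L ω) a)) else 0 with hF2def
  set F3 : Ω → ℝ := fun ω => if S ω = 0 then (1/P0) * (w ω * T2 (L ω) a) else 0
    with hF3def
  have hsplit : ∀ ω, w ω * Hfun S L A M Y a (1/P0) e f g h T2 T1 ω
      = F1 ω + F2 ω + F3 ω := by
    intro ω
    unfold Hfun
    by_cases h0 : S ω = 0
    · have h1 : ¬ (S ω = 1 ∧ A ω = a) := by
        rintro ⟨hx, -⟩; rw [h0] at hx; exact absurd hx (by norm_num)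
      simp [hF1def, hF2def, hF3def, h0, h1]
      ring
    · by_cases h1 : S ω = 1 ∧ A ω = a
      · obtain ⟨hs1, ha⟩ := h1
        simp [hF1def, hF2def, hF3def, h0, hs1, ha]
        ring
      · simp [hF1def, hF2def, hF3def, h0, h1]
  -- piece 1 vanishes
  have hS1 : (∑ ω, F1 ω) = 0 := by
    rw [sum_fiber (fun ω => (L ω, M ω)) F1]
    refine Finset.sum_eq_zero fun p _ => ?_
    obtain ⟨l, m⟩ := p
    have hN : (0:ℝ) < Pr w (fun ω => L ω = l ∧ M ω = m ∧ S ω = 0) := by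
      have hp := (hpos m l a 0 (Or.inl rfl)).1
      have heq : Pr w (fun ω => L ω = l ∧ M ω = m ∧ S ω = 0)
          = Pr w (fun ω => S ω = 0 ∧ M ω = m ∧ L ω = l) :=
        Pr_congr w fun ω => by tauto
      rw [heq]; exact hp
    have hT := hT1 l m
    unfold CE at hT
    have hYS : (∑ ω, if L ω = l ∧ M ω = m ∧ S ω = 0 then w ω * Y ω else 0)
        = T1 l m * Pr w (fun ω => L ω = l ∧ M ω = m ∧ S ω = 0) := by
      rw [hT]
      field_simp
    have hPrS : Pr w (fun ω => L ω = l ∧ M ω = m ∧ S ω = 0)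
        = ∑ ω, (if L ω = l ∧ M ω = m ∧ S ω = 0 then w ω else 0) := by
      unfold Pr
      exact Finset.sum_congr rfl fun ω _ => by
        by_cases hc : L ω = l ∧ M ω = m ∧ S ω = 0 <;> simp [hc]
    have hz : (∑ ω, if L ω = l ∧ M ω = m ∧ S ω = 0
        then w ω * (Y ω - T1 l m) else 0) = 0 := by
      have expand : (∑ ω, if L ω = l ∧ M ω = m ∧ S ω = 0
          then w ω * (Y ω - T1 l m) else 0)
          = (∑ ω, if L ω = l ∧ M ω = m ∧ S ω = 0 then w ω * Y ω else 0)
            - (∑ ω, (if L ω = l ∧ M ω = m ∧ S ω = 0 then w ω else 0)) * T1 l m := by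
        rw [Finset.sum_mul, ← Finset.sum_sub_distrib]
        exact Finset.sum_congr rfl fun ω _ => by
          by_cases hc : L ω = l ∧ M ω = m ∧ S ω = 0 <;> simp [hc] <;> ring
      rw [expand, hYS, ← hPrS]
      ring
    have step : (∑ ω, if (L ω, M ω) = (l, m) then F1 ω else 0)
        = (1/P0) * (f m l * g 1 l m / (e l * g 0 l m)) *
          ∑ ω, if L ω = l ∧ M ω = m ∧ S ω = 0
            then w ω * (Y ω - T1 l m) else 0 := by
      rw [Finset.mul_sum]
      refine Finset.sum_congr rfl fun ω _ => ?_
      by_cases h1 : L ω = l <;> by_cases h2 : M ω = m <;>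
        by_cases h3 : S ω = 0 <;>
        simp [hF1def, h1, h2, h3, Prod.ext_iff]
    refine Eq.trans (Finset.sum_congr rfl fun ω _ => ?_)
      (step.trans (by rw [hz, mul_zero]))
    exact ite_inst_congr Iff.rfl _ _
  -- piece 2 vanishes
  have hS2 : (∑ ω, F2 ω) = 0 := by
    rw [sum_fiber L F2]
    refine Finset.sum_eq_zero fun l _ => ?_
    have hQ : (0:ℝ) < Pr w (fun ω => L ω = l ∧ A ω = a ∧ S ω = 1) := by
      have hp := (hpos m0 l a 1 (Or.inr rfl)).2.1
      have heq : Pr w (fun ω => L ω = l ∧ A ω = a ∧ S ω = 1)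
          = Pr w (fun ω => S ω = 1 ∧ A ω = a ∧ L ω = l) :=
        Pr_congr w fun ω => by tauto
      rw [heq]; exact hp
    have hQsum : Pr w (fun ω => L ω = l ∧ A ω = a ∧ S ω = 1)
        = ∑ m, Pr w (fun ω => M ω = m ∧ (L ω = l ∧ A ω = a ∧ S ω = 1)) :=
      Pr_fiber w M _
    have hT2' : T2 l a * Pr w (fun ω => L ω = l ∧ A ω = a ∧ S ω = 1)
        = ∑ m, T1 l m *
            Pr w (fun ω => M ω = m ∧ (L ω = l ∧ A ω = a ∧ S ω = 1)) := by
      rw [hT2 l a, Finset.sum_mul]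
      refine Finset.sum_congr rfl fun m _ => ?_
      unfold CP
      rw [mul_assoc, div_mul_cancel₀ _ (ne_of_gt hQ)]
    have key : (∑ m, (T1 l m - T2 l a) *
        Pr w (fun ω => M ω = m ∧ (L ω = l ∧ A ω = a ∧ S ω = 1))) = 0 := by
      have expand : (∑ m, (T1 l m - T2 l a) *
          Pr w (fun ω => M ω = m ∧ (L ω = l ∧ A ω = a ∧ S ω = 1)))
          = (∑ m, T1 l m *
              Pr w (fun ω => M ω = m ∧ (L ω = l ∧ A ω = a ∧ S ω = 1)))
            - T2 l a * ∑ m,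
              Pr w (fun ω => M ω = m ∧ (L ω = l ∧ A ω = a ∧ S ω = 1)) := by
        rw [Finset.mul_sum, ← Finset.sum_sub_distrib]
        exact Finset.sum_congr rfl fun m _ => by ring
      rw [expand, ← hQsum, hT2']
      ring
    have step2 : (∑ ω, if L ω = l ∧ A ω = a ∧ S ω = 1
          then w ω * (T1 l (M ω) - T2 l a) else 0)
        = ∑ m, (T1 l m - T2 l a) *
            Pr w (fun ω => M ω = m ∧ (L ω = l ∧ A ω = a ∧ S ω = 1)) := by
      rw [sum_fiber M (fun ω => if L ω = l ∧ A ω = a ∧ S ω = 1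
          then w ω * (T1 l (M ω) - T2 l a) else 0)]
      refine Finset.sum_congr rfl fun m _ => ?_
      unfold Pr
      rw [Finset.mul_sum]
      refine Finset.sum_congr rfl fun ω _ => ?_
      by_cases h1 : M ω = m <;>
        by_cases h2 : L ω = l ∧ A ω = a ∧ S ω = 1 <;>
        simp [h1, h2] <;> ring
    have step : (∑ ω, if L ω = l then F2 ω else 0)
        = (1/P0) * (h 0 l / (e l * h 1 l)) *
          ∑ ω, if L ω = l ∧ A ω = a ∧ S ω = 1
            then w ω * (T1 l (M ω) - T2 l a) else 0 := by
      rw [Finset.mul_sum]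
      refine Finset.sum_congr rfl fun ω _ => ?_
      by_cases h1 : L ω = l <;> by_cases h2 : A ω = a <;>
        by_cases h3 : S ω = 1 <;> simp [hF2def, h1, h2, h3] <;> ring
    rw [step, step2, key, mul_zero]
  -- piece 3 gives Ψᵃ
  have hS3 : (∑ ω, F3 ω) = PsiA w S L A M Y a := by
    rw [sum_fiber L F3]
    have step : ∀ l, (∑ ω, if L ω = l then F3 ω else 0)
        = T2 l a * CP w (fun ω => L ω = l) (fun ω => S ω = 0) := by
      intro l
      have h1 : (∑ ω, if L ω = l then F3 ω else 0)
          = (∑ ω, (if L ω = l ∧ S ω = 0 then w ω else 0)) * ((1/P0) * T2 l a) := by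
        rw [Finset.sum_mul]
        refine Finset.sum_congr rfl fun ω _ => ?_
        by_cases h1 : L ω = l <;> by_cases h2 : S ω = 0 <;>
          simp [hF3def, h1, h2] <;> ring
      have h2 : Pr w (fun ω => L ω = l ∧ S ω = 0)
          = ∑ ω, (if L ω = l ∧ S ω = 0 then w ω else 0) := by
        unfold Pr
        exact Finset.sum_congr rfl fun ω _ => by
          by_cases hc : L ω = l ∧ S ω = 0 <;> simp [hc]
      rw [h1, ← h2]
      unfold CP
      rw [← hP0def]
      ring
    rw [Finset.sum_congr rfl fun l _ => step l]
    unfold PsiA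
    rw [Finset.sum_comm]
    refine Finset.sum_congr rfl fun l _ => ?_
    rw [hT2 l a, Finset.sum_mul]
    refine Finset.sum_congr rfl fun m _ => ?_
    rw [hT1 l m]
    have hCE : CE w Y (fun ω => L ω = l ∧ M ω = m ∧ S ω = 0)
        = CE w Y (fun ω => M ω = m ∧ L ω = l ∧ S ω = 0) := by
      unfold CE
      congr 1
      · exact Finset.sum_congr rfl fun ω _ => by
          by_cases h1 : L ω = l <;> by_cases h2 : M ω = m <;>
            by_cases h3 : S ω = 0 <;> simp [h1, h2, h3]
      · exact Pr_congr w fun ω => by tauto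
    rw [hCE]
  calc ∑ ω, w ω * Hfun S L A M Y a (1/P0) e f g h T2 T1 ω
      = ∑ ω, (F1 ω + F2 ω + F3 ω) := Finset.sum_congr rfl fun ω _ => hsplit ω
    _ = (∑ ω, F1 ω) + (∑ ω, F2 ω) + (∑ ω, F3 ω) := by
        rw [Finset.sum_add_distrib, Finset.sum_add_distrib]
    _ = PsiA w S L A M Y a := by rw [hS1, hS2, hS3]; ring
end
end

section
/- Under the same setup, suppose model M3 holds: T1*(l,m) = E[Y | L=l, M=m, S=0], e*(l) = P(A=a | S=1, L=l) > \epsilon, and h*(s,l) = P(S=s | L=l) > \epsilon, while f*, g*, T2* are arbitrary (bounded, with denominators bounded away from zero). Then E[ H(1/P(S=0), e*, f*, g*, h*, T2*, T1*) ] = \Psi^a. -/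
open Finset
open scoped Classical

noncomputable section

lemma CE_congr {Ω : Type*} [Fintype Ω] (w : Ω → ℝ) (X : Ω → ℝ) {E F : Ω → Prop}
    (h : ∀ ω, E ω ↔ F ω) : CE w X E = CE w X F := by
  unfold CE
  rw [Pr_congr w h]
  congr 1
  exact Finset.sum_congr rfl fun ω _ => by simp [h ω]

lemma Pr_mono {Ω : Type*} [Fintype Ω] (w : Ω → ℝ) (hw : ∀ ω, 0 ≤ w ω) {E F : Ω → Prop}
    (h : ∀ ω, E ω → F ω) : Pr w E ≤ Pr w F := by
  refine Finset.sum_le_sum fun ω _ => ?_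
  by_cases hE : E ω
  · simp [hE, h ω hE]
  · by_cases hF : F ω <;> simp [hE, hF, hw ω]

lemma sum_Pr {Ω 𝕄 : Type*} [Fintype Ω] [Fintype 𝕄] (w : Ω → ℝ) (M : Ω → 𝕄) (E : Ω → Prop) :
    ∑ m, Pr w (fun ω => M ω = m ∧ E ω) = Pr w E := by
  unfold Pr
  rw [Finset.sum_comm]
  refine Finset.sum_congr rfl fun ω _ => ?_
  by_cases hE : E ω <;> simp [hE]

lemma group_sum {Ω 𝕃 𝕄 : Type*} [Fintype Ω] [Fintype 𝕃] [Fintype 𝕄]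
    (L : Ω → 𝕃) (M : Ω → 𝕄) (F : Ω → ℝ) :
    ∑ ω, F ω = ∑ l, ∑ m, ∑ ω, if L ω = l ∧ M ω = m then F ω else 0 := by
  have h1 : ∀ ω, ∑ l, ∑ m, (if L ω = l ∧ M ω = m then F ω else 0) = F ω := by
    intro ω
    simp [ite_and, Finset.sum_ite_eq]
  calc ∑ ω, F ω = ∑ ω, ∑ l, ∑ m, if L ω = l ∧ M ω = m then F ω else 0 :=
        (Finset.sum_congr rfl fun ω _ => (h1 ω).symm)
    _ = ∑ l, ∑ ω, ∑ m, if L ω = l ∧ M ω = m then F ω else 0 := Finset.sum_comm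
    _ = ∑ l, ∑ m, ∑ ω, if L ω = l ∧ M ω = m then F ω else 0 :=
        Finset.sum_congr rfl fun l _ => Finset.sum_comm

lemma groupL_sum {Ω 𝕃 : Type*} [Fintype Ω] [Fintype 𝕃] (L : Ω → 𝕃) (F : Ω → ℝ) :
    ∑ ω, F ω = ∑ l, ∑ ω, if L ω = l then F ω else 0 := by
  have h1 : ∀ ω, ∑ l, (if L ω = l then F ω else 0) = F ω := by
    intro ω; simp [Finset.sum_ite_eq]
  calc ∑ ω, F ω = ∑ ω, ∑ l, if L ω = l then F ω else 0 :=
        (Finset.sum_congr rfl fun ω _ => (h1 ω).symm)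
    _ = ∑ l, ∑ ω, if L ω = l then F ω else 0 := Finset.sum_comm

/-- third arm of triple robustness (model M3). -/
theorem triple_robust_M3
    {Ω 𝕃 𝕄 𝔸 : Type*} [Fintype Ω] [Fintype 𝕃] [Fintype 𝕄] [Fintype 𝔸]
    (w : Ω → ℝ) (hw0 : ∀ ω, 0 ≤ w ω) (hw1 : ∑ ω, w ω = 1)
    (S : Ω → ℕ) (L : Ω → 𝕃) (A : Ω → 𝔸) (M : Ω → 𝕄) (Y : Ω → ℝ) (a : 𝔸)
    (hposS0 : Pr w (fun ω => S ω = 0) > 0)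
    (hpos : ∀ m l a' s, s = 0 ∨ s = 1 →
      Pr w (fun ω => S ω = s ∧ M ω = m ∧ L ω = l) > 0 ∧
      Pr w (fun ω => S ω = s ∧ A ω = a' ∧ L ω = l) > 0 ∧
      Pr w (fun ω => L ω = l) > 0)
    (e : 𝕃 → ℝ) (f : 𝕄 → 𝕃 → ℝ) (g : ℕ → 𝕃 → 𝕄 → ℝ) (h : ℕ → 𝕃 → ℝ)
    (T1 : 𝕃 → 𝕄 → ℝ) (T2 : 𝕃 → 𝔸 → ℝ) (ε : ℝ) (hε : ε > 0)
    -- model M3: T1, e, h correct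
    (hT1 : ∀ l m, T1 l m = CE w Y (fun ω => L ω = l ∧ M ω = m ∧ S ω = 0))
    (he : ∀ l, e l = CP w (fun ω => A ω = a) (fun ω => S ω = 1 ∧ L ω = l) ∧ e l > ε)
    (hh : ∀ s l, s = 0 ∨ s = 1 →
      h s l = CP w (fun ω => S ω = s) (fun ω => L ω = l) ∧ h s l > ε)
    -- f, g, T2 arbitrary (bounded, denominators bounded away from zero)
    (hf : ∀ m l, ε ≤ f m l ∧ f m l ≤ 1 - ε)
    (hg : ∀ s m l, ε ≤ g s l m ∧ g s l m ≤ 1 - ε)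
    (hT2bdd : ∃ C : ℝ, ∀ l a', |T2 l a'| ≤ C) :
    (∑ ω, w ω *
        Hfun S L A M Y a (1 / Pr w (fun ω => S ω = 0)) e f g h T2 T1 ω) =
      PsiA w S L A M Y a := by
  -- Ω is nonempty
  have hΩ : Nonempty Ω := by
    by_contra hne
    rw [not_nonempty_iff] at hne
    simp [Pr] at hposS0
  obtain ⟨ω0⟩ := hΩ
  -- positivity facts
  have hPLl : ∀ l, Pr w (fun ω => L ω = l) > 0 :=
    fun l => (hpos (M ω0) l a 0 (Or.inl rfl)).2.2
  have hPS1AL : ∀ l : 𝕃, Pr w (fun ω => L ω = l ∧ A ω = a ∧ S ω = 1) > 0 := fun l =>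
    lt_of_lt_of_le (hpos (M ω0) l a 1 (Or.inr rfl)).2.1
      (le_of_eq (Pr_congr w (fun ω => by tauto)))
  have hPS1L : ∀ l, Pr w (fun ω => S ω = 1 ∧ L ω = l) > 0 := fun l =>
    lt_of_lt_of_le (hpos (M ω0) l a 1 (Or.inr rfl)).2.1
      (Pr_mono w hw0 fun ω hω => ⟨hω.1, hω.2.2⟩)
  have hPS0L : ∀ l, Pr w (fun ω => L ω = l ∧ S ω = 0) > 0 := fun l =>
    lt_of_lt_of_le (hpos (M ω0) l a 0 (Or.inl rfl)).2.1
      (by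
        refine le_trans (Pr_mono w hw0 fun ω hω => (⟨hω.1, hω.2.2⟩ : S ω = 0 ∧ L ω = l)) ?_
        exact le_of_eq (Pr_congr w fun ω => by tauto))
  have hPev1 : ∀ l m, Pr w (fun ω => L ω = l ∧ M ω = m ∧ S ω = 0) > 0 := fun l m =>
    lt_of_lt_of_le (hpos m l a 0 (Or.inl rfl)).1
      (le_of_eq (Pr_congr w fun ω => by tauto))
  -- split the sum into the three arms
  have hsplit : (∑ ω, w ω *
        Hfun S L A M Y a (1 / Pr w (fun ω => S ω = 0)) e f g h T2 T1 ω)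
      = (1 / Pr w (fun ω => S ω = 0)) *
          (∑ ω, w ω * ((if S ω = 0 then (1:ℝ) else 0) * f (M ω) (L ω) * g 1 (L ω) (M ω) /
            (e (L ω) * g 0 (L ω) (M ω)) * (Y ω - T1 (L ω) (M ω))))
        + (1 / Pr w (fun ω => S ω = 0)) *
          (∑ ω, w ω * ((if S ω = 1 ∧ A ω = a then (1:ℝ) else 0) * h 0 (L ω) /
            (e (L ω) * h 1 (L ω)) * (T1 (L ω) (M ω) - T2 (L ω) (A ω))))
        + (1 / Pr w (fun ω => S ω = 0)) *
          (∑ ω, w ω * ((if S ω = 0 then (1:ℝ) else 0) * T2 (L ω) a)) := by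
    rw [Finset.mul_sum, Finset.mul_sum, Finset.mul_sum, ← Finset.sum_add_distrib,
      ← Finset.sum_add_distrib]
    exact Finset.sum_congr rfl fun ω _ => by unfold Hfun; ring
  -- arm 1 vanishes
  have hA1 : (∑ ω, w ω * ((if S ω = 0 then (1:ℝ) else 0) * f (M ω) (L ω) * g 1 (L ω) (M ω) /
      (e (L ω) * g 0 (L ω) (M ω)) * (Y ω - T1 (L ω) (M ω)))) = 0 := by
    rw [group_sum L M]
    refine Finset.sum_eq_zero fun l _ => Finset.sum_eq_zero fun m _ => ?_
    have hp := hPev1 l m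
    have hstep : (∑ ω, if L ω = l ∧ M ω = m then
          w ω * ((if S ω = 0 then (1:ℝ) else 0) * f (M ω) (L ω) * g 1 (L ω) (M ω) /
            (e (L ω) * g 0 (L ω) (M ω)) * (Y ω - T1 (L ω) (M ω))) else 0)
        = (f m l * g 1 l m / (e l * g 0 l m)) *
          ((∑ ω, if L ω = l ∧ M ω = m ∧ S ω = 0 then w ω * Y ω else 0)
            - T1 l m * Pr w (fun ω => L ω = l ∧ M ω = m ∧ S ω = 0)) := by
      simp only [Pr]
      have hterm : ∀ ω, (if L ω = l ∧ M ω = m then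
            w ω * ((if S ω = 0 then (1:ℝ) else 0) * f (M ω) (L ω) * g 1 (L ω) (M ω) /
              (e (L ω) * g 0 (L ω) (M ω)) * (Y ω - T1 (L ω) (M ω))) else 0)
          = (f m l * g 1 l m / (e l * g 0 l m)) *
            ((if L ω = l ∧ M ω = m ∧ S ω = 0 then w ω * Y ω else 0)
              - T1 l m * (if L ω = l ∧ M ω = m ∧ S ω = 0 then w ω else 0)) := by
        intro ω
        by_cases h1 : L ω = l
        · by_cases h2 : M ω = m
          · by_cases h3 : S ω = 0
            · simp only [h1, h2, h3, and_self, if_true, true_and]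
              ring
            · simp [h1, h2, h3]
          · simp [h2]
        · simp [h1]
      rw [Finset.sum_congr rfl fun ω _ => hterm ω, ← Finset.mul_sum,
        Finset.sum_sub_distrib, ← Finset.mul_sum]
      refine congrArg _ (congrArg₂ (· - ·) ?_ (congrArg _ ?_)) <;>
        exact Finset.sum_congr rfl fun ω _ => by congr
    rw [hstep]
    have hT1' := hT1 l m
    rw [CE] at hT1'
    rw [hT1', div_mul_cancel₀ _ (ne_of_gt hp)]
    exact mul_eq_zero_of_right _
      (sub_eq_zero_of_eq (Finset.sum_congr rfl fun ω _ => by congr))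
  -- arm 2
  have hA2 : (∑ ω, w ω * ((if S ω = 1 ∧ A ω = a then (1:ℝ) else 0) * h 0 (L ω) /
      (e (L ω) * h 1 (L ω)) * (T1 (L ω) (M ω) - T2 (L ω) (A ω))))
      = ∑ l, ∑ m, (T1 l m - T2 l a) *
          (CP w (fun ω => M ω = m) (fun ω => L ω = l ∧ A ω = a ∧ S ω = 1) *
            Pr w (fun ω => L ω = l ∧ S ω = 0)) := by
    rw [group_sum L M]
    refine Finset.sum_congr rfl fun l _ => Finset.sum_congr rfl fun m _ => ?_
    have hstep : (∑ ω, if L ω = l ∧ M ω = m then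
          w ω * ((if S ω = 1 ∧ A ω = a then (1:ℝ) else 0) * h 0 (L ω) /
            (e (L ω) * h 1 (L ω)) * (T1 (L ω) (M ω) - T2 (L ω) (A ω))) else 0)
        = (h 0 l / (e l * h 1 l)) * (T1 l m - T2 l a) *
            Pr w (fun ω => M ω = m ∧ (L ω = l ∧ A ω = a ∧ S ω = 1)) := by
      simp only [Pr]
      rw [Finset.mul_sum]
      refine Finset.sum_congr rfl fun ω _ => ?_
      by_cases h1 : L ω = l
      · by_cases h2 : M ω = m
        · by_cases h3 : S ω = 1 ∧ A ω = a
          · obtain ⟨h3a, h3b⟩ := h3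
            simp only [h1, h2, h3a, h3b, and_self, if_true, true_and]
            ring
          · have h3' : ¬(A ω = a ∧ S ω = 1) := fun hc => h3 ⟨hc.2, hc.1⟩
            simp [h1, h2, h3, h3']
        · simp [h2]
      · simp [h1]
    rw [hstep]
    have hel := (he l).1
    have hh1 := (hh 1 l (Or.inr rfl)).1
    have hh0 := (hh 0 l (Or.inl rfl)).1
    rw [CP] at hel hh1 hh0
    have c1 : Pr w (fun ω => A ω = a ∧ (S ω = 1 ∧ L ω = l))
        = Pr w (fun ω => L ω = l ∧ A ω = a ∧ S ω = 1) := Pr_congr w fun ω => by tauto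
    have c3 : Pr w (fun ω => S ω = 0 ∧ L ω = l)
        = Pr w (fun ω => L ω = l ∧ S ω = 0) := Pr_congr w fun ω => by tauto
    rw [c1] at hel
    rw [c3] at hh0
    rw [CP, hel, hh0, hh1]
    have hne1 : Pr w (fun ω => L ω = l ∧ A ω = a ∧ S ω = 1) ≠ 0 := ne_of_gt (hPS1AL l)
    have hne2 : Pr w (fun ω => S ω = 1 ∧ L ω = l) ≠ 0 := ne_of_gt (hPS1L l)
    have hne3 : Pr w (fun ω => L ω = l) ≠ 0 := ne_of_gt (hPLl l)
    field_simp
  -- arm 3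
  have hA3 : (∑ ω, w ω * ((if S ω = 0 then (1:ℝ) else 0) * T2 (L ω) a))
      = ∑ l, T2 l a * Pr w (fun ω => L ω = l ∧ S ω = 0) := by
    rw [groupL_sum L]
    refine Finset.sum_congr rfl fun l _ => ?_
    simp only [Pr]
    rw [Finset.mul_sum]
    refine Finset.sum_congr rfl fun ω _ => ?_
    by_cases h1 : L ω = l
    · by_cases h3 : S ω = 0
      · simp [h1, h3, mul_comm]
      · simp [h1, h3]
    · simp [h1]
  -- sum of conditional probabilities of M is 1
  have hCPsum : ∀ l, (∑ m, CP w (fun ω => M ω = m)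
      (fun ω => L ω = l ∧ A ω = a ∧ S ω = 1)) = 1 := by
    intro l
    simp only [CP]
    rw [← Finset.sum_div, sum_Pr]
    exact div_self (ne_of_gt (hPS1AL l))
  -- assemble
  rw [hsplit, hA1, hA2, hA3, mul_zero, zero_add]
  unfold PsiA
  have hswap : (∑ m : 𝕄, ∑ l : 𝕃,
      CE w Y (fun ω => M ω = m ∧ L ω = l ∧ S ω = 0) *
      CP w (fun ω => M ω = m) (fun ω => L ω = l ∧ A ω = a ∧ S ω = 1) *
      CP w (fun ω => L ω = l) (fun ω => S ω = 0))
      = ∑ l : 𝕃, ∑ m : 𝕄,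
      CE w Y (fun ω => M ω = m ∧ L ω = l ∧ S ω = 0) *
      CP w (fun ω => M ω = m) (fun ω => L ω = l ∧ A ω = a ∧ S ω = 1) *
      CP w (fun ω => L ω = l) (fun ω => S ω = 0) := Finset.sum_comm
  rw [hswap]
  rw [Finset.mul_sum, Finset.mul_sum, ← Finset.sum_add_distrib]
  refine Finset.sum_congr rfl fun l _ => ?_
  have hCE : ∀ m, CE w Y (fun ω => M ω = m ∧ L ω = l ∧ S ω = 0) = T1 l m := fun m => by
    rw [hT1 l m]
    exact CE_congr w Y fun ω => by tauto
  have hCPL : CP w (fun ω => L ω = l) (fun ω => S ω = 0)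
      = Pr w (fun ω => L ω = l ∧ S ω = 0) / Pr w (fun ω => S ω = 0) := rfl
  have e1 : (∑ m, (T1 l m - T2 l a) *
        (CP w (fun ω => M ω = m) (fun ω => L ω = l ∧ A ω = a ∧ S ω = 1) *
          Pr w (fun ω => L ω = l ∧ S ω = 0)))
      = (∑ m, T1 l m * CP w (fun ω => M ω = m) (fun ω => L ω = l ∧ A ω = a ∧ S ω = 1) *
          Pr w (fun ω => L ω = l ∧ S ω = 0))
        - (T2 l a * Pr w (fun ω => L ω = l ∧ S ω = 0)) *
            ∑ m, CP w (fun ω => M ω = m) (fun ω => L ω = l ∧ A ω = a ∧ S ω = 1) := by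
    rw [Finset.mul_sum, ← Finset.sum_sub_distrib]
    exact Finset.sum_congr rfl fun m _ => by ring
  have e2 : (∑ m, CE w Y (fun ω => M ω = m ∧ L ω = l ∧ S ω = 0) *
        CP w (fun ω => M ω = m) (fun ω => L ω = l ∧ A ω = a ∧ S ω = 1) *
        CP w (fun ω => L ω = l) (fun ω => S ω = 0))
      = (1 / Pr w (fun ω => S ω = 0)) *
          ∑ m, T1 l m * CP w (fun ω => M ω = m) (fun ω => L ω = l ∧ A ω = a ∧ S ω = 1) *
            Pr w (fun ω => L ω = l ∧ S ω = 0) := by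
    rw [Finset.mul_sum]
    refine Finset.sum_congr rfl fun m _ => ?_
    rw [hCE m, hCPL]
    ring
  rw [e1, hCPsum l, mul_one, e2]
  ring
end
end

section
/- With notation as above, the three terms of the efficient influence function \varphi = \varphi_1 + \varphi_2 + \varphi_3, where \varphi_1 = (1-S)/P(S=0) * [p(M|S=1,A=a,L)/p(M|S=0,L)] (Y - T1(L,M)), \varphi_2 = S 1{A=a} P(S=0|L) / [P(S=0) P(A=a|S=1,L) P(S=1|L)] (T1(L,M) - T2(L,A)), \varphi_3 = (1-S)/P(S=0) (T2(L,a) - \Psi), are pairwise uncorrelated: E[\varphi_1 \varphi_2] = E[\varphi_1 \varphi_3] = E[\varphi_2 \varphi_3] = 0. -/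
open Finset
open scoped Classical

noncomputable section

lemma sum_if_congr {Ω : Type*} [Fintype Ω] (P Q : Ω → Prop)
    [∀ ω, Decidable (P ω)] [∀ ω, Decidable (Q ω)]
    (h : ∀ ω, P ω ↔ Q ω) (f : Ω → ℝ) :
    (∑ ω, if P ω then f ω else 0) = ∑ ω, if Q ω then f ω else 0 :=
  Finset.sum_congr rfl fun ω _ => if_congr (h ω) rfl rfl

/-- the three terms of the efficient influence function are
pairwise uncorrelated. -/
theorem eif_terms_pairwise_uncorrelated
    {Ω 𝕃 𝕄 𝔸 : Type*} [Fintype Ω] [Fintype 𝕃] [Fintype 𝕄] [Fintype 𝔸]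
    (w : Ω → ℝ) (hw0 : ∀ ω, 0 ≤ w ω) (hw1 : ∑ ω, w ω = 1)
    (S : Ω → ℕ) (L : Ω → 𝕃) (A : Ω → 𝔸) (M : Ω → 𝕄) (Y : Ω → ℝ) (a : 𝔸)
    (hposS0 : Pr w (fun ω => S ω = 0) > 0)
    (hpos : ∀ m l a' s, s = 0 ∨ s = 1 →
      Pr w (fun ω => S ω = s ∧ M ω = m ∧ L ω = l) > 0 ∧
      Pr w (fun ω => S ω = s ∧ A ω = a' ∧ L ω = l) > 0 ∧
      Pr w (fun ω => L ω = l) > 0)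
    (T1 : 𝕃 → 𝕄 → ℝ) (T2 : 𝕃 → 𝔸 → ℝ) (Ψ : ℝ) (φ₁ φ₂ φ₃ : Ω → ℝ)
    (hT1 : ∀ l m, T1 l m = CE w Y (fun ω => L ω = l ∧ M ω = m ∧ S ω = 0))
    (hT2 : ∀ l a', T2 l a' = ∑ m : 𝕄,
      T1 l m * CP w (fun ω => M ω = m) (fun ω => L ω = l ∧ A ω = a' ∧ S ω = 1))
    (hΨ : Ψ = CE w (fun ω => T2 (L ω) a) (fun ω => S ω = 0))
    (hφ₁ : ∀ ω, φ₁ ω =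
      (if S ω = 0 then (1:ℝ) else 0) / Pr w (fun ω' => S ω' = 0) *
        (CP w (fun ω' => M ω' = M ω) (fun ω' => S ω' = 1 ∧ A ω' = a ∧ L ω' = L ω) /
         CP w (fun ω' => M ω' = M ω) (fun ω' => S ω' = 0 ∧ L ω' = L ω)) *
        (Y ω - T1 (L ω) (M ω)))
    (hφ₂ : ∀ ω, φ₂ ω =
      (if S ω = 1 ∧ A ω = a then (1:ℝ) else 0) *
        CP w (fun ω' => S ω' = 0) (fun ω' => L ω' = L ω) /
        (Pr w (fun ω' => S ω' = 0) *
         CP w (fun ω' => A ω' = a) (fun ω' => S ω' = 1 ∧ L ω' = L ω) *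
         CP w (fun ω' => S ω' = 1) (fun ω' => L ω' = L ω)) *
        (T1 (L ω) (M ω) - T2 (L ω) (A ω)))
    (hφ₃ : ∀ ω, φ₃ ω =
      (if S ω = 0 then (1:ℝ) else 0) / Pr w (fun ω' => S ω' = 0) *
        (T2 (L ω) a - Ψ)) :
    (∑ ω, w ω * (φ₁ ω * φ₂ ω)) = 0 ∧
    (∑ ω, w ω * (φ₁ ω * φ₃ ω)) = 0 ∧
    (∑ ω, w ω * (φ₂ ω * φ₃ ω)) = 0 := by
  classical
  -- inner mean-zero fact for φ₁ factor
  have inner : ∀ l m,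
      (∑ ω, if S ω = 0 ∧ L ω = l ∧ M ω = m then w ω * (Y ω - T1 l m) else 0) = 0 := by
    intro l m
    set F : Ω → Prop := (fun ω => L ω = l ∧ M ω = m ∧ S ω = 0) with hF
    have hp : Pr w F > 0 := by
      have h := (hpos m l a 0 (Or.inl rfl)).1
      have heq : Pr w (fun ω => S ω = 0 ∧ M ω = m ∧ L ω = l) = Pr w F := by
        rw [hF]; unfold Pr; apply Finset.sum_congr rfl; intro ω _
        by_cases h1 : S ω = 0 <;> by_cases h2 : M ω = m <;> by_cases h3 : L ω = l <;>
          simp [h1, h2, h3]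
      exact heq ▸ h
    have hT : T1 l m * Pr w F = ∑ ω, if F ω then w ω * Y ω else 0 := by
      rw [hT1 l m, ← hF]
      unfold CE
      rw [div_mul_cancel₀ _ (ne_of_gt hp)]
      congr!
    calc (∑ ω, if S ω = 0 ∧ L ω = l ∧ M ω = m then w ω * (Y ω - T1 l m) else 0)
        = ∑ ω, ((if F ω then w ω * Y ω else 0) - T1 l m * (if F ω then w ω else 0)) := by
          apply Finset.sum_congr rfl; intro ω _
          by_cases h : F ω
          · have hm : F ω := h
            rw [hF] at hm
            have h' : S ω = 0 ∧ L ω = l ∧ M ω = m := ⟨hm.2.2, hm.1, hm.2.1⟩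
            rw [if_pos h', if_pos h, if_pos h]; ring
          · have hm : ¬ (L ω = l ∧ M ω = m ∧ S ω = 0) := by rw [hF] at h; exact h
            have h' : ¬(S ω = 0 ∧ L ω = l ∧ M ω = m) := fun hc => hm ⟨hc.2.1, hc.2.2, hc.1⟩
            rw [if_neg h', if_neg h, if_neg h]; ring
      _ = (∑ ω, if F ω then w ω * Y ω else 0) - T1 l m * Pr w F := by
          rw [Finset.sum_sub_distrib, ← Finset.mul_sum]; unfold Pr; congr!
      _ = 0 := by rw [hT]; ring
  refine ⟨?_, ?_, ?_⟩
  · -- φ₁ φ₂ : disjoint indicators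
    apply Finset.sum_eq_zero; intro ω _
    by_cases h : S ω = 0
    · have : ¬ (S ω = 1 ∧ A ω = a) := by simp [h]
      rw [hφ₂ ω]; simp [this]
    · rw [hφ₁ ω]; simp [h]
  · -- φ₁ φ₃ : condition on (L, M, S=0)
    set c : 𝕃 → 𝕄 → ℝ := fun l m =>
      CP w (fun ω' => M ω' = m) (fun ω' => S ω' = 1 ∧ A ω' = a ∧ L ω' = l) /
        CP w (fun ω' => M ω' = m) (fun ω' => S ω' = 0 ∧ L ω' = l) /
        Pr w (fun ω' => S ω' = 0) / Pr w (fun ω' => S ω' = 0) * (T2 l a - Ψ) with hc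
    have hpt : ∀ ω, w ω * (φ₁ ω * φ₃ ω)
        = c (L ω) (M ω) * (if S ω = 0 then w ω * (Y ω - T1 (L ω) (M ω)) else 0) := by
      intro ω
      rw [hφ₁ ω, hφ₃ ω, hc]
      by_cases h : S ω = 0 <;> simp [h] <;> ring
    calc (∑ ω, w ω * (φ₁ ω * φ₃ ω))
        = ∑ ω, ∑ l, ∑ m, (if L ω = l ∧ M ω = m then
            c l m * (if S ω = 0 then w ω * (Y ω - T1 l m) else 0) else 0) := by
          apply Finset.sum_congr rfl; intro ω _
          rw [hpt ω]
          rw [Finset.sum_eq_single (L ω)]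
          · rw [Finset.sum_eq_single (M ω)]
            · simp
            · intro m _ hm
              have : ¬ M ω = m := fun h => hm h.symm
              simp [this]
            · simp
          · intro l _ hl
            apply Finset.sum_eq_zero; intro m _
            have : ¬ L ω = l := fun h => hl h.symm
            simp [this]
          · simp
      _ = ∑ l, ∑ m, c l m * (∑ ω, if S ω = 0 ∧ L ω = l ∧ M ω = m
              then w ω * (Y ω - T1 l m) else 0) := by
          rw [Finset.sum_comm]
          apply Finset.sum_congr rfl; intro l _
          rw [Finset.sum_comm]
          apply Finset.sum_congr rfl; intro m _
          rw [Finset.mul_sum]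
          apply Finset.sum_congr rfl; intro ω _
          by_cases h1 : L ω = l ∧ M ω = m <;> by_cases h2 : S ω = 0 <;>
            simp [h1, h2]
      _ = 0 := by
          apply Finset.sum_eq_zero; intro l _
          apply Finset.sum_eq_zero; intro m _
          rw [inner l m, mul_zero]
  · -- φ₂ φ₃ : disjoint indicators
    apply Finset.sum_eq_zero; intro ω _
    by_cases h : S ω = 0
    · have : ¬ (S ω = 1 ∧ A ω = a) := by simp [h]
      rw [hφ₂ ω]; simp [this]
    · rw [hφ₃ ω]; simp [h]
end
end

section
/- Let (S, L, A, M, Y) be discrete random variables and M^a, Y^a counterfactuals satisfying consistency (M^a = M and Y^a = Y on {A=a}) and the condition that Y^a is independent of (a, A) given (M^a, L, S=0), i.e., E[Y^a | M^a=m, L=l, A=a', S=0] depends neither on a nor on a'. Then the observed data satisfy the conditional independence restriction: E[Y | M=m, L=l, A=a', S=0] does not depend on a', for all (m, l, a') with P(M=m, L=l, A=a', S=0) > 0. -/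
open Finset
open scoped Classical

noncomputable section

/-- Remark 3 — the counterfactual assumptions imply the testable
observed-data restriction `Y ⟂ A | (M, L, S=0)` at the level of conditional
outcome means. -/
theorem testable_implication
    {Ω 𝕃 𝕄 𝔸 : Type*} [Fintype Ω] [Fintype 𝕃] [Fintype 𝕄] [Fintype 𝔸]
    (w : Ω → ℝ) (hw0 : ∀ ω, 0 ≤ w ω) (hw1 : ∑ ω, w ω = 1)
    (S : Ω → ℕ) (L : Ω → 𝕃) (A : Ω → 𝔸) (M : Ω → 𝕄) (Y : Ω → ℝ)
    (Ma : 𝔸 → Ω → 𝕄) (Ya : 𝔸 → Ω → ℝ)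
    -- consistency: M^a = M and Y^a = Y on {A = a}
    (hconsist : ∀ (a' : 𝔸) (ω : Ω), A ω = a' → Ma a' ω = M ω ∧ Ya a' ω = Y ω)
    -- Y^a ⟂ (a, A) | (M^a, L, S=0): the conditional mean of Y^a given
    -- (M^a = m, L = l, A = a', S = 0) depends on neither a nor a'
    (hexch : ∀ (a₁ a₂ b₁ b₂ : 𝔸) (m : 𝕄) (l : 𝕃),
      Pr w (fun ω => Ma a₁ ω = m ∧ L ω = l ∧ A ω = b₁ ∧ S ω = 0) > 0 →
      Pr w (fun ω => Ma a₂ ω = m ∧ L ω = l ∧ A ω = b₂ ∧ S ω = 0) > 0 →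
      CE w (Ya a₁) (fun ω => Ma a₁ ω = m ∧ L ω = l ∧ A ω = b₁ ∧ S ω = 0) =
      CE w (Ya a₂) (fun ω => Ma a₂ ω = m ∧ L ω = l ∧ A ω = b₂ ∧ S ω = 0)) :
    ∀ (m : 𝕄) (l : 𝕃) (a₁ a₂ : 𝔸),
      Pr w (fun ω => M ω = m ∧ L ω = l ∧ A ω = a₁ ∧ S ω = 0) > 0 →
      Pr w (fun ω => M ω = m ∧ L ω = l ∧ A ω = a₂ ∧ S ω = 0) > 0 →
      CE w Y (fun ω => M ω = m ∧ L ω = l ∧ A ω = a₁ ∧ S ω = 0) =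
      CE w Y (fun ω => M ω = m ∧ L ω = l ∧ A ω = a₂ ∧ S ω = 0) := by
  intro m l a₁ a₂ h₁ h₂
  have key : ∀ a : 𝔸,
      (Pr w (fun ω => M ω = m ∧ L ω = l ∧ A ω = a ∧ S ω = 0) =
        Pr w (fun ω => Ma a ω = m ∧ L ω = l ∧ A ω = a ∧ S ω = 0)) ∧
      (CE w Y (fun ω => M ω = m ∧ L ω = l ∧ A ω = a ∧ S ω = 0) =
        CE w (Ya a) (fun ω => Ma a ω = m ∧ L ω = l ∧ A ω = a ∧ S ω = 0)) := by
    intro a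
    have hiff : ∀ ω, (M ω = m ∧ L ω = l ∧ A ω = a ∧ S ω = 0) ↔
        (Ma a ω = m ∧ L ω = l ∧ A ω = a ∧ S ω = 0) := by
      intro ω
      constructor
      · rintro ⟨h1, h2, h3, h4⟩
        exact ⟨(hconsist a ω h3).1.trans h1, h2, h3, h4⟩
      · rintro ⟨h1, h2, h3, h4⟩
        exact ⟨((hconsist a ω h3).1).symm.trans h1, h2, h3, h4⟩
    have hPr : Pr w (fun ω => M ω = m ∧ L ω = l ∧ A ω = a ∧ S ω = 0) =
        Pr w (fun ω => Ma a ω = m ∧ L ω = l ∧ A ω = a ∧ S ω = 0) := by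
      unfold Pr
      refine Finset.sum_congr rfl fun ω _ => ?_
      by_cases h : M ω = m ∧ L ω = l ∧ A ω = a ∧ S ω = 0
      · rw [if_pos h, if_pos ((hiff ω).mp h)]
      · rw [if_neg h, if_neg (fun hc => h ((hiff ω).mpr hc))]
    refine ⟨hPr, ?_⟩
    unfold CE
    rw [hPr]
    congr 1
    refine Finset.sum_congr rfl fun ω _ => ?_
    by_cases h : M ω = m ∧ L ω = l ∧ A ω = a ∧ S ω = 0
    · rw [if_pos h, if_pos ((hiff ω).mp h), (hconsist a ω h.2.2.1).2]
    · rw [if_neg h, if_neg (fun hc => h ((hiff ω).mpr hc))]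
  rw [(key a₁).2, (key a₂).2]
  exact hexch a₁ a₂ a₁ a₂ m l ((key a₁).1 ▸ h₁) ((key a₂).1 ▸ h₂)
end
end

section
/- Let S, L, A, M, Y be discrete random variables with P(Y=y | M=m, L=l, A=a', S=s) = P(Y=y | M=m, L=l) for all (m,l,a',s) in the support (i.e., Y is independent of (A,S) given (M,L)). Define T1(l,m) = E[Y | L=l, M=m] and T2(l,a') = \sum_m T1(l,m) P(M=m | L=l, A=a', S=1). Then the pooled-outcome influence function \varphi(O) = [P(A=a|S=1,M,L) p(M|L,S=1) P(S=0|L)] / [P(A=a|S=1,L) (\sum_s p(M|L,S=s) P(S=s|L)) P(S=0)] (Y - T1(L,M)) + S 1{A=a} P(S=0|L)/[P(A=a|S=1,L) P(S=1|L) P(S=0)] (T1(L,M) - T2(L,A)) + (1-S)/P(S=0) (T2(L,a) - E[T2(L,a)|S=0]) has mean zero. -/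
open Finset
open scoped Classical

noncomputable section

lemma sum_fiber1 {Ω β : Type*} [Fintype Ω] [Fintype β] (B : Ω → β) (f : β → Ω → ℝ) :
    ∑ ω, f (B ω) ω = ∑ b, ∑ ω, if B ω = b then f b ω else 0 := by
  rw [Finset.sum_comm]
  exact Finset.sum_congr rfl fun ω _ => by simp [Finset.sum_ite_eq]

lemma sum_fiber2 {Ω β γ : Type*} [Fintype Ω] [Fintype β] [Fintype γ]
    (B : Ω → β) (C : Ω → γ) (f : β → γ → Ω → ℝ) :
    ∑ ω, f (B ω) (C ω) ω = ∑ b, ∑ c, ∑ ω, if B ω = b ∧ C ω = c then f b c ω else 0 := by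
  rw [sum_fiber1 B (fun b ω => f b (C ω) ω)]
  refine Finset.sum_congr rfl fun b _ => ?_
  rw [sum_fiber1 C (fun c ω => if B ω = b then f b c ω else 0)]
  refine Finset.sum_congr rfl fun c _ => Finset.sum_congr rfl fun ω _ => ?_
  by_cases h1 : B ω = b <;> by_cases h2 : C ω = c <;> simp [h1, h2]

/-- Coefficient of the first (pooled-outcome residual) term. -/
def c1 {Ω 𝕃 𝕄 𝔸 : Type*} [Fintype Ω] (w : Ω → ℝ) (S : Ω → ℕ) (L : Ω → 𝕃)
    (A : Ω → 𝔸) (M : Ω → 𝕄) (a : 𝔸) (m : 𝕄) (l : 𝕃) : ℝ :=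
  (CP w (fun ω' => A ω' = a) (fun ω' => S ω' = 1 ∧ M ω' = m ∧ L ω' = l) *
   CP w (fun ω' => M ω' = m) (fun ω' => L ω' = l ∧ S ω' = 1) *
   CP w (fun ω' => S ω' = 0) (fun ω' => L ω' = l)) /
  (CP w (fun ω' => A ω' = a) (fun ω' => S ω' = 1 ∧ L ω' = l) *
   (CP w (fun ω' => M ω' = m) (fun ω' => L ω' = l ∧ S ω' = 0) *
      CP w (fun ω' => S ω' = 0) (fun ω' => L ω' = l) +
    CP w (fun ω' => M ω' = m) (fun ω' => L ω' = l ∧ S ω' = 1) *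
      CP w (fun ω' => S ω' = 1) (fun ω' => L ω' = l)) *
   Pr w (fun ω' => S ω' = 0))

/-- Coefficient of the second term. -/
def d2 {Ω 𝕃 𝔸 : Type*} [Fintype Ω] (w : Ω → ℝ) (S : Ω → ℕ) (L : Ω → 𝕃)
    (A : Ω → 𝔸) (a : 𝔸) (l : 𝕃) : ℝ :=
  CP w (fun ω' => S ω' = 0) (fun ω' => L ω' = l) /
  (CP w (fun ω' => A ω' = a) (fun ω' => S ω' = 1 ∧ L ω' = l) *
   CP w (fun ω' => S ω' = 1) (fun ω' => L ω' = l) *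
   Pr w (fun ω' => S ω' = 0))

/-- mean-zero property of the pooled-outcome efficient influence
function (Equation 5), under `Y ⟂ (A, S) | (M, L)`. -/
theorem pooled_eif_mean_zero
    {Ω 𝕃 𝕄 𝔸 : Type*} [Fintype Ω] [Fintype 𝕃] [Fintype 𝕄] [Fintype 𝔸]
    (w : Ω → ℝ) (hw0 : ∀ ω, 0 ≤ w ω) (hw1 : ∑ ω, w ω = 1)
    (S : Ω → ℕ) (L : Ω → 𝕃) (A : Ω → 𝔸) (M : Ω → 𝕄) (Y : Ω → ℝ) (a : 𝔸)
    (hposS0 : Pr w (fun ω => S ω = 0) > 0)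
    (hpos : ∀ m l a' s, s = 0 ∨ s = 1 →
      Pr w (fun ω => S ω = s ∧ M ω = m ∧ L ω = l) > 0 ∧
      Pr w (fun ω => S ω = s ∧ A ω = a' ∧ L ω = l) > 0 ∧
      Pr w (fun ω => L ω = l) > 0 ∧
      Pr w (fun ω => M ω = m ∧ L ω = l) > 0)
    -- Y ⟂ (A, S) | (M, L)
    (hindep : ∀ (y : ℝ) (m : 𝕄) (l : 𝕃) (a' : 𝔸) (s : ℕ),
      Pr w (fun ω => M ω = m ∧ L ω = l ∧ A ω = a' ∧ S ω = s) > 0 →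
      CP w (fun ω => Y ω = y) (fun ω => M ω = m ∧ L ω = l ∧ A ω = a' ∧ S ω = s) =
      CP w (fun ω => Y ω = y) (fun ω => M ω = m ∧ L ω = l))
    (T1 : 𝕃 → 𝕄 → ℝ) (T2 : 𝕃 → 𝔸 → ℝ) (Ψ : ℝ)
    (hT1 : ∀ l m, T1 l m = CE w Y (fun ω => L ω = l ∧ M ω = m))
    (hT2 : ∀ l a', T2 l a' = ∑ m : 𝕄,
      T1 l m * CP w (fun ω => M ω = m) (fun ω => L ω = l ∧ A ω = a' ∧ S ω = 1))
    (hΨ : Ψ = CE w (fun ω => T2 (L ω) a) (fun ω => S ω = 0)) :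
    (∑ ω, w ω *
      ((CP w (fun ω' => A ω' = a) (fun ω' => S ω' = 1 ∧ M ω' = M ω ∧ L ω' = L ω) *
        CP w (fun ω' => M ω' = M ω) (fun ω' => L ω' = L ω ∧ S ω' = 1) *
        CP w (fun ω' => S ω' = 0) (fun ω' => L ω' = L ω)) /
       (CP w (fun ω' => A ω' = a) (fun ω' => S ω' = 1 ∧ L ω' = L ω) *
        (CP w (fun ω' => M ω' = M ω) (fun ω' => L ω' = L ω ∧ S ω' = 0) *
           CP w (fun ω' => S ω' = 0) (fun ω' => L ω' = L ω) +
         CP w (fun ω' => M ω' = M ω) (fun ω' => L ω' = L ω ∧ S ω' = 1) *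
           CP w (fun ω' => S ω' = 1) (fun ω' => L ω' = L ω)) *
        Pr w (fun ω' => S ω' = 0)) *
       (Y ω - T1 (L ω) (M ω)) +
       (if S ω = 1 ∧ A ω = a then (1:ℝ) else 0) *
        CP w (fun ω' => S ω' = 0) (fun ω' => L ω' = L ω) /
        (CP w (fun ω' => A ω' = a) (fun ω' => S ω' = 1 ∧ L ω' = L ω) *
         CP w (fun ω' => S ω' = 1) (fun ω' => L ω' = L ω) *
         Pr w (fun ω' => S ω' = 0)) *
        (T1 (L ω) (M ω) - T2 (L ω) (A ω)) +
       (if S ω = 0 then (1:ℝ) else 0) / Pr w (fun ω' => S ω' = 0) *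
        (T2 (L ω) a - Ψ))) = 0 := by
  classical
  have hP0 : Pr w (fun ω' => S ω' = 0) ≠ 0 := ne_of_gt hposS0
  have hΩ : Nonempty Ω := by
    by_contra h
    rw [not_nonempty_iff] at h
    have := hposS0
    simp [Pr, Finset.univ_eq_empty] at this
  -- Lemma A: per (m,l), the residual Y - T1 has conditional mean zero
  have lemA : ∀ (m : 𝕄) (l : 𝕃),
      (∑ ω, if M ω = m ∧ L ω = l then w ω * (Y ω - T1 l m) else 0) = 0 := by
    intro m l
    have hPml : Pr w (fun ω => L ω = l ∧ M ω = m) > 0 := by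
      have h := (hpos m l a 0 (Or.inl rfl)).2.2.2
      rwa [Pr_congr w (fun ω => (and_comm : (L ω = l ∧ M ω = m) ↔ _))]
    have hT1' : T1 l m =
        (∑ ω, if L ω = l ∧ M ω = m then w ω * Y ω else 0) /
          Pr w (fun ω => L ω = l ∧ M ω = m) := by
      rw [hT1]; unfold CE; congr!
    have step : ∀ ω, (if M ω = m ∧ L ω = l then w ω * (Y ω - T1 l m) else 0) =
        (if L ω = l ∧ M ω = m then w ω * Y ω else 0) -
        T1 l m * (if L ω = l ∧ M ω = m then w ω else 0) := by
      intro ω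
      by_cases h : L ω = l ∧ M ω = m
      · rw [if_pos ⟨h.2, h.1⟩, if_pos h, if_pos h]; ring
      · rw [if_neg (fun hh => h ⟨hh.2, hh.1⟩), if_neg h, if_neg h]; ring
    simp_rw [step]
    rw [Finset.sum_sub_distrib, ← Finset.mul_sum]
    have hPr : (∑ ω, if L ω = l ∧ M ω = m then w ω else 0) =
        Pr w (fun ω => L ω = l ∧ M ω = m) := by unfold Pr; congr!
    rw [hPr, hT1', div_mul_cancel₀ _ (ne_of_gt hPml), sub_self]
  -- Lemma B: per l, on {S=1, A=a} the residual T1 - T2 has conditional mean zero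
  have lemB : ∀ l : 𝕃,
      (∑ ω, if L ω = l ∧ S ω = 1 ∧ A ω = a then w ω * (T1 l (M ω) - T2 l (A ω)) else 0)
        = 0 := by
    intro l
    obtain ⟨ω0⟩ := hΩ
    have hP : Pr w (fun ω => L ω = l ∧ A ω = a ∧ S ω = 1) > 0 := by
      have h := (hpos (M ω0) l a 1 (Or.inr rfl)).2.1
      rwa [Pr_congr w (fun ω =>
        (by tauto : (L ω = l ∧ A ω = a ∧ S ω = 1) ↔ (S ω = 1 ∧ A ω = a ∧ L ω = l)))]
    have step : ∀ ω,
        (if L ω = l ∧ S ω = 1 ∧ A ω = a then w ω * (T1 l (M ω) - T2 l (A ω)) else 0) =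
        (if L ω = l ∧ S ω = 1 ∧ A ω = a then w ω * T1 l (M ω) else 0) -
        T2 l a * (if L ω = l ∧ S ω = 1 ∧ A ω = a then w ω else 0) := by
      intro ω
      by_cases h : L ω = l ∧ S ω = 1 ∧ A ω = a
      · rw [if_pos h, if_pos h, if_pos h, h.2.2]; ring
      · rw [if_neg h, if_neg h, if_neg h]; ring
    simp_rw [step]
    have h1 : (∑ ω, if L ω = l ∧ S ω = 1 ∧ A ω = a then w ω * T1 l (M ω) else 0) =
        ∑ m, T1 l m * Pr w (fun ω => M ω = m ∧ L ω = l ∧ A ω = a ∧ S ω = 1) := by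
      rw [sum_fiber1 M (fun m ω => if L ω = l ∧ S ω = 1 ∧ A ω = a then w ω * T1 l m else 0)]
      refine Finset.sum_congr rfl fun m _ => ?_
      simp only [Pr]
      rw [Finset.mul_sum]
      refine Finset.sum_congr rfl fun ω _ => ?_
      by_cases h1 : M ω = m <;> by_cases h2 : L ω = l <;> by_cases h3 : S ω = 1 <;>
        by_cases h4 : A ω = a <;> simp [h1, h2, h3, h4, mul_comm]
    have h2 : (∑ ω, if L ω = l ∧ S ω = 1 ∧ A ω = a then w ω else 0) =
        Pr w (fun ω => L ω = l ∧ A ω = a ∧ S ω = 1) := by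
      rw [show Pr w (fun ω => L ω = l ∧ A ω = a ∧ S ω = 1) =
            Pr w (fun ω => L ω = l ∧ S ω = 1 ∧ A ω = a) from Pr_congr w fun ω => by tauto]
      unfold Pr; congr!
    rw [Finset.sum_sub_distrib, ← Finset.mul_sum, h1, h2, hT2, Finset.sum_mul]
    have h3 : ∀ m : 𝕄,
        T1 l m * CP w (fun ω => M ω = m) (fun ω => L ω = l ∧ A ω = a ∧ S ω = 1) *
          Pr w (fun ω => L ω = l ∧ A ω = a ∧ S ω = 1) =
        T1 l m * Pr w (fun ω => M ω = m ∧ L ω = l ∧ A ω = a ∧ S ω = 1) := by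
      intro m
      simp only [CP]
      rw [mul_assoc, div_mul_cancel₀ _ (ne_of_gt hP)]
    simp_rw [h3, sub_self]
  -- Lemma C: centering of T2 at Ψ on {S=0}
  have lemC : (∑ ω, if S ω = 0 then w ω * (T2 (L ω) a - Ψ) else 0) = 0 := by
    have step : ∀ ω, (if S ω = 0 then w ω * (T2 (L ω) a - Ψ) else 0) =
        (if S ω = 0 then w ω * T2 (L ω) a else 0) -
        Ψ * (if S ω = 0 then w ω else 0) := by
      intro ω; by_cases h : S ω = 0 <;> simp [h] <;> ring
    simp_rw [step]
    rw [Finset.sum_sub_distrib, ← Finset.mul_sum]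
    have hPr : (∑ ω, if S ω = 0 then w ω else 0) = Pr w (fun ω' => S ω' = 0) := by
      unfold Pr; congr!
    have hΨ' : Ψ = (∑ ω, if S ω = 0 then w ω * T2 (L ω) a else 0) /
        Pr w (fun ω' => S ω' = 0) := by rw [hΨ]; unfold CE; congr!
    rw [hPr, hΨ', div_mul_cancel₀ _ hP0, sub_self]
  -- Split the sum into the three terms
  have split : (∑ ω, w ω *
      ((CP w (fun ω' => A ω' = a) (fun ω' => S ω' = 1 ∧ M ω' = M ω ∧ L ω' = L ω) *
        CP w (fun ω' => M ω' = M ω) (fun ω' => L ω' = L ω ∧ S ω' = 1) *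
        CP w (fun ω' => S ω' = 0) (fun ω' => L ω' = L ω)) /
       (CP w (fun ω' => A ω' = a) (fun ω' => S ω' = 1 ∧ L ω' = L ω) *
        (CP w (fun ω' => M ω' = M ω) (fun ω' => L ω' = L ω ∧ S ω' = 0) *
           CP w (fun ω' => S ω' = 0) (fun ω' => L ω' = L ω) +
         CP w (fun ω' => M ω' = M ω) (fun ω' => L ω' = L ω ∧ S ω' = 1) *
           CP w (fun ω' => S ω' = 1) (fun ω' => L ω' = L ω)) *
        Pr w (fun ω' => S ω' = 0)) *
       (Y ω - T1 (L ω) (M ω)) +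
       (if S ω = 1 ∧ A ω = a then (1:ℝ) else 0) *
        CP w (fun ω' => S ω' = 0) (fun ω' => L ω' = L ω) /
        (CP w (fun ω' => A ω' = a) (fun ω' => S ω' = 1 ∧ L ω' = L ω) *
         CP w (fun ω' => S ω' = 1) (fun ω' => L ω' = L ω) *
         Pr w (fun ω' => S ω' = 0)) *
        (T1 (L ω) (M ω) - T2 (L ω) (A ω)) +
       (if S ω = 0 then (1:ℝ) else 0) / Pr w (fun ω' => S ω' = 0) *
        (T2 (L ω) a - Ψ))) =
      (∑ ω, w ω * c1 w S L A M a (M ω) (L ω) * (Y ω - T1 (L ω) (M ω))) +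
      (∑ ω, if S ω = 1 ∧ A ω = a then
          w ω * d2 w S L A a (L ω) * (T1 (L ω) (M ω) - T2 (L ω) (A ω)) else 0) +
      (∑ ω, (if S ω = 0 then w ω * (T2 (L ω) a - Ψ) else 0) / Pr w (fun ω' => S ω' = 0)) := by
    rw [← Finset.sum_add_distrib, ← Finset.sum_add_distrib]
    refine Finset.sum_congr rfl fun ω _ => ?_
    simp only [c1, d2]
    split_ifs <;> ring
  rw [split]
  have hS1 : (∑ ω, w ω * c1 w S L A M a (M ω) (L ω) * (Y ω - T1 (L ω) (M ω))) = 0 := by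
    rw [sum_fiber2 M L (fun m l ω => w ω * c1 w S L A M a m l * (Y ω - T1 l m))]
    refine Finset.sum_eq_zero fun m _ => Finset.sum_eq_zero fun l _ => ?_
    calc (∑ ω, if M ω = m ∧ L ω = l then w ω * c1 w S L A M a m l * (Y ω - T1 l m) else 0)
        = c1 w S L A M a m l *
            ∑ ω, (if M ω = m ∧ L ω = l then w ω * (Y ω - T1 l m) else 0) := by
          rw [Finset.mul_sum]
          exact Finset.sum_congr rfl fun ω _ => by split_ifs <;> ring
      _ = 0 := by rw [lemA m l, mul_zero]
  have hS2 : (∑ ω, if S ω = 1 ∧ A ω = a then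
      w ω * d2 w S L A a (L ω) * (T1 (L ω) (M ω) - T2 (L ω) (A ω)) else 0) = 0 := by
    rw [sum_fiber1 L (fun l ω => if S ω = 1 ∧ A ω = a then
      w ω * d2 w S L A a l * (T1 l (M ω) - T2 l (A ω)) else 0)]
    refine Finset.sum_eq_zero fun l _ => ?_
    calc (∑ ω, if L ω = l then
          (if S ω = 1 ∧ A ω = a then w ω * d2 w S L A a l * (T1 l (M ω) - T2 l (A ω)) else 0)
          else 0)
        = d2 w S L A a l *
            ∑ ω, (if L ω = l ∧ S ω = 1 ∧ A ω = a then
              w ω * (T1 l (M ω) - T2 l (A ω)) else 0) := by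
          rw [Finset.mul_sum]
          refine Finset.sum_congr rfl fun ω _ => ?_
          by_cases h1 : L ω = l <;> by_cases h2 : S ω = 1 ∧ A ω = a <;>
            simp [h1, h2] <;> ring
      _ = 0 := by rw [lemB l, mul_zero]
  have hS3 : (∑ ω, (if S ω = 0 then w ω * (T2 (L ω) a - Ψ) else 0) /
      Pr w (fun ω' => S ω' = 0)) = 0 := by
    rw [← Finset.sum_div, lemC, zero_div]
  rw [hS1, hS2, hS3]
  ring
end
end

section
/- Let L, A, M be discrete random variables and M^a a counterfactual exposure. Assume: (i) M^a is independent of A given (L, S=1) with consistency M^a = M on {A=a}, so that P(M^a=m | L=l, S=1) = P(M=m | A=a, L=l, S=1); (ii) M^a is independent of S given L, so P(M^a=m | L=l, S=0) = P(M^a=m | L=l, S=1). Then P(M^a=m | L=l, S=0) = P(M=m | A=a, L=l, S=1) for all (m, l) with P(L=l, S=0) > 0 and P(A=a, L=l, S=1) > 0, i.e., the counterfactual exposure distribution in the target source is identified and transported from the trial. -/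
open Finset
open scoped Classical

noncomputable section

/-- transportability of the counterfactual exposure law from
the trial to the target source (the `M^{transport}` step of Theorem 1). -/
theorem transport_exposure_law
    {Ω 𝕃 𝕄 𝔸 : Type*} [Fintype Ω] [Fintype 𝕃] [Fintype 𝕄] [Fintype 𝔸]
    (w : Ω → ℝ) (hw0 : ∀ ω, 0 ≤ w ω) (hw1 : ∑ ω, w ω = 1)
    (S : Ω → ℕ) (L : Ω → 𝕃) (A : Ω → 𝔸) (M : Ω → 𝕄) (a : 𝔸) (Ma : Ω → 𝕄)
    -- consistency: M^a = M on {A = a}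
    (hconsist : ∀ ω, A ω = a → Ma ω = M ω)
    -- (i) no treatment confounding for the exposure in the trial:
    -- M^a ⟂ A | (L, S=1)
    (hMaA : ∀ (m : 𝕄) (l : 𝕃) (a' : 𝔸),
      Pr w (fun ω => A ω = a' ∧ L ω = l ∧ S ω = 1) > 0 →
      CP w (fun ω => Ma ω = m) (fun ω => A ω = a' ∧ L ω = l ∧ S ω = 1) =
      CP w (fun ω => Ma ω = m) (fun ω => L ω = l ∧ S ω = 1))
    -- (ii) source irrelevance for the exposure: M^a ⟂ S | L
    (hMaS : ∀ (m : 𝕄) (l : 𝕃),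
      Pr w (fun ω => L ω = l ∧ S ω = 0) > 0 →
      Pr w (fun ω => L ω = l ∧ S ω = 1) > 0 →
      CP w (fun ω => Ma ω = m) (fun ω => L ω = l ∧ S ω = 0) =
      CP w (fun ω => Ma ω = m) (fun ω => L ω = l ∧ S ω = 1)) :
    ∀ (m : 𝕄) (l : 𝕃),
      Pr w (fun ω => L ω = l ∧ S ω = 0) > 0 →
      Pr w (fun ω => A ω = a ∧ L ω = l ∧ S ω = 1) > 0 →
      CP w (fun ω => Ma ω = m) (fun ω => L ω = l ∧ S ω = 0) =
      CP w (fun ω => M ω = m) (fun ω => A ω = a ∧ L ω = l ∧ S ω = 1) := by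
  intro m l h0 h1
  have hLS1 : Pr w (fun ω => L ω = l ∧ S ω = 1) > 0 := by
    refine lt_of_lt_of_le h1 ?_
    unfold Pr
    apply Finset.sum_le_sum
    intro ω _
    by_cases h : A ω = a ∧ L ω = l ∧ S ω = 1
    · simp [h, h.2]
    · simp only [h, if_false]
      by_cases h2 : L ω = l ∧ S ω = 1 <;> simp [h2, hw0 ω]
  rw [hMaS m l h0 hLS1, ← hMaA m l a h1]
  unfold CP Pr
  congr 1
  apply Finset.sum_congr rfl
  intro ω _
  by_cases h : A ω = a ∧ L ω = l ∧ S ω = 1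
  · simp [h, hconsist ω h.1]
  · simp [h]
end
end
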